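/- arXiv:1109.3809 — 8 statements merged into one kernel-verified Lean document; each statement's English description precedes it below -/
import Mathlib

section
/- Let A(z) = Σ_{k=0}^N A_k z^k be an m×m complex matrix polynomial that is paraunitary. Then there exist c ∈ ℂ with |c| = 1 and an integer d ≥ 0 such that det A(z) = c z^d for all z ∈ ℂ. -/
open Matrix BigOperators

/-- Evaluation of the matrix polynomial `A(z) = ∑_{k=0}^N A_k z^k`. -/
noncomputable def mpEval {m : ℕ} (N : ℕ) (A : ℕ → Matrix (Fin m) (Fin m) ℂ) (z : ℂ) :
    Matrix (Fin m) (Fin m) ℂ :=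
  ∑ k ∈ Finset.range (N + 1), z ^ k • A k

/-- Evaluation of the adjoint `Ã(z) = ∑_{k=0}^N A_k^* z^{-k}`. -/
noncomputable def mpAdjEval {m : ℕ} (N : ℕ) (A : ℕ → Matrix (Fin m) (Fin m) ℂ) (z : ℂ) :
    Matrix (Fin m) (Fin m) ℂ :=
  ∑ k ∈ Finset.range (N + 1), (z⁻¹) ^ k • (A k)ᴴ

/-- `A(z)` is paraunitary: `A(z) Ã(z) = I` for every `z ∈ ℂ \ {0}`. -/
def IsParaunitary {m : ℕ} (N : ℕ) (A : ℕ → Matrix (Fin m) (Fin m) ℂ) : Prop :=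
  ∀ z : ℂ, z ≠ 0 → mpEval N A z * mpAdjEval N A z = 1

/-- The determinant of the polynomial matrix, as a polynomial. -/
noncomputable def detPoly {m : ℕ} (N : ℕ) (A : ℕ → Matrix (Fin m) (Fin m) ℂ) : Polynomial ℂ :=
  (Matrix.of fun i j => ∑ k ∈ Finset.range (N + 1),
    Polynomial.C (A k i j) * Polynomial.X ^ k).det

lemma detPoly_eval {m : ℕ} (N : ℕ) (A : ℕ → Matrix (Fin m) (Fin m) ℂ) (z : ℂ) :
    (detPoly N A).eval z = (mpEval N A z).det := by
  rw [detPoly, ← Polynomial.coe_evalRingHom, RingHom.map_det]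
  congr 1
  ext i j
  rw [RingHom.mapMatrix_apply, Matrix.map_apply, Matrix.of_apply, map_sum]
  simp only [_root_.map_mul, Polynomial.coe_evalRingHom, Polynomial.eval_C, map_pow,
    Polynomial.eval_X, mpEval, Matrix.sum_apply, Matrix.smul_apply, smul_eq_mul]
  exact Finset.sum_congr rfl fun k _ => mul_comm _ _

lemma monomial_of_eval_ne_zero (p : Polynomial ℂ) (hp : p ≠ 0)
    (h : ∀ z : ℂ, z ≠ 0 → p.eval z ≠ 0) :
    p = Polynomial.C p.leadingCoeff * Polynomial.X ^ p.natDegree := by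
  have hs : p.roots.card = p.natDegree :=
    (Polynomial.splits_iff_card_roots).1 (IsAlgClosed.splits p)
  have hprod := Polynomial.C_leadingCoeff_mul_prod_multiset_X_sub_C hs
  have hroots : ∀ r ∈ p.roots, r = (0 : ℂ) := by
    intro r hr
    by_contra h0
    exact h r h0 ((Polynomial.mem_roots hp).1 hr)
  have hX : (p.roots.map fun a => Polynomial.X - Polynomial.C a).prod
      = Polynomial.X ^ p.natDegree := by
    calc (p.roots.map fun a => Polynomial.X - Polynomial.C a).prod
        = (p.roots.map fun _ => (Polynomial.X : Polynomial ℂ)).prod := by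
          congr 1
          refine Multiset.map_congr rfl (fun r hr => ?_)
          rw [hroots r hr, map_zero, sub_zero]
      _ = Polynomial.X ^ p.natDegree := by
          rw [Multiset.map_const', Multiset.prod_replicate, hs]
  rw [← hX, hprod]

theorem stmt_1 {m N : ℕ} (A : ℕ → Matrix (Fin m) (Fin m) ℂ)
    (hpara : IsParaunitary N A) :
    ∃ (c : ℂ) (d : ℕ), ‖c‖ = 1 ∧
      ∀ z : ℂ, (mpEval N A z).det = c * z ^ d := by
  set P := detPoly N A with hP
  set Q := detPoly N (fun k => (A k)ᴴ) with hQ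
  have hadj : ∀ z : ℂ, mpAdjEval N A z = mpEval N (fun k => (A k)ᴴ) z⁻¹ := fun z => rfl
  have key : ∀ z : ℂ, z ≠ 0 → P.eval z * Q.eval z⁻¹ = 1 := by
    intro z hz
    rw [hP, hQ, detPoly_eval, detPoly_eval, ← hadj, ← Matrix.det_mul, hpara z hz,
      Matrix.det_one]
  have hPne : ∀ z : ℂ, z ≠ 0 → P.eval z ≠ 0 := by
    intro z hz h0
    have := key z hz
    rw [h0, zero_mul] at this
    exact zero_ne_one this
  have hp0 : P ≠ 0 := by
    intro h
    exact hPne 1 one_ne_zero (by rw [h, Polynomial.eval_zero])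
  have hmono := monomial_of_eval_ne_zero P hp0 hPne
  have heval : ∀ z : ℂ, P.eval z = P.leadingCoeff * z ^ P.natDegree := by
    intro z
    conv_lhs => rw [hmono]
    simp
  refine ⟨P.leadingCoeff, P.natDegree, ?_, ?_⟩
  · have h1 : mpEval N A 1 * mpAdjEval N A 1 = 1 := hpara 1 one_ne_zero
    have hct : mpAdjEval N A 1 = (mpEval N A 1)ᴴ := by
      simp [mpEval, mpAdjEval, Matrix.conjTranspose_sum]
    rw [hct] at h1
    have hdet : (mpEval N A 1).det * star (mpEval N A 1).det = 1 := by
      rw [← Matrix.det_conjTranspose, ← Matrix.det_mul, h1, Matrix.det_one]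
    have hc : (mpEval N A 1).det = P.leadingCoeff := by
      rw [← detPoly_eval, ← hP, heval, one_pow, mul_one]
    rw [hc] at hdet
    have habs : ‖P.leadingCoeff‖ * ‖P.leadingCoeff‖ = 1 := by
      have := congrArg (‖·‖) hdet
      rwa [norm_mul, Complex.star_def, Complex.norm_conj, norm_one] at this
    rcases mul_self_eq_one_iff.1 habs with h | h
    · exact h
    · have := norm_nonneg P.leadingCoeff
      linarith
  · intro z
    rw [← detPoly_eval, ← hP, heval]
end

section
/- Let A(z) be a wavelet matrix of rank m, order N and degree N satisfying A(1) = I_m. Then there exist orthogonal projections P_1, …, P_N on ℂ^m, each of rank one, with P_j P_{j+1} ≠ 0 for j = 1, …, N−1, such that A(z) = ∏_{j=1}^N (I_m − P_j + P_j z) for all z ∈ ℂ (the product taken in the order j = 1, …, N). -/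
open Matrix BigOperators

namespace Stmt5Aux

variable {m : ℕ}

/-! ### Rank-one projections from unit vectors -/

lemma projP_conjTranspose (v : Fin m → ℂ) :
    (vecMulVec v (star v))ᴴ = vecMulVec v (star v) := by
  ext i j
  simp [conjTranspose_apply, vecMulVec_apply, mul_comm]

lemma projP_idem (v : Fin m → ℂ) (hv : star v ⬝ᵥ v = 1) :
    vecMulVec v (star v) * vecMulVec v (star v) = vecMulVec v (star v) := by
  ext i j
  rw [mul_apply]
  have h1 : ∀ k, vecMulVec v (star v) i k * vecMulVec v (star v) k j
      = (v i * star v j) * (star v k * v k) := by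
    intro k; simp [vecMulVec_apply]; ring
  rw [Finset.sum_congr rfl fun k _ => h1 k, ← Finset.mul_sum]
  have h2 : ∑ k, star v k * v k = 1 := hv
  rw [h2, mul_one, vecMulVec_apply]

lemma rank_ne_zero_of_ne_zero {M : Matrix (Fin m) (Fin m) ℂ} (h : M ≠ 0) : M.rank ≠ 0 := by
  intro h0
  apply h
  have hbot : LinearMap.range M.mulVecLin = ⊥ := Submodule.finrank_eq_zero.mp h0
  ext i j
  have h1 : M.mulVecLin (Pi.single j 1) = 0 := by
    rw [← Submodule.mem_bot (R := ℂ), ← hbot]; exact LinearMap.mem_range_self _ _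
  have h2 := congrFun h1 i
  simpa [mulVecLin_apply, mulVec_single] using h2

lemma rank_vecMulVec_le (w u : Fin m → ℂ) : (vecMulVec w u).rank ≤ 1 := by
  rw [vecMulVec_eq Unit]
  calc (replicateCol Unit w * replicateRow Unit u).rank ≤ (replicateRow Unit u).rank := rank_mul_le_right _ _
  _ ≤ Fintype.card Unit := rank_le_card_height _
  _ = 1 := by simp

lemma projP_rank (v : Fin m → ℂ) (hv : star v ⬝ᵥ v = 1) :
    (vecMulVec v (star v)).rank = 1 := by
  refine le_antisymm (rank_vecMulVec_le _ _) ?_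
  have htr : (vecMulVec v (star v)).trace = 1 := by
    rw [trace]
    have h1 : ∀ k, (vecMulVec v (star v)).diag k = star v k * v k := by
      intro k; simp [diag, vecMulVec_apply, mul_comm]
    rw [Finset.sum_congr rfl fun k _ => h1 k]
    exact hv
  have hP : vecMulVec v (star v) ≠ 0 := by
    intro h0; rw [h0] at htr; simp [trace] at htr
  have := rank_ne_zero_of_ne_zero hP
  omega

lemma det_one_sub_add_smul (v : Fin m → ℂ) (z : ℂ) (hv : star v ⬝ᵥ v = 1) :
    (1 - vecMulVec v (star v) + z • vecMulVec v (star v)).det = z := by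
  have h1 : (1 : Matrix (Fin m) (Fin m) ℂ) - vecMulVec v (star v) + z • vecMulVec v (star v)
      = 1 + replicateCol Unit ((z - 1) • v) * replicateRow Unit (star v) := by
    rw [← vecMulVec_eq Unit]
    ext i j
    simp [vecMulVec_apply, Matrix.one_apply, smul_eq_mul]
    ring
  rw [h1, det_one_add_replicateCol_mul_replicateRow]
  have h2 : star v ⬝ᵥ (z - 1) • v = z - 1 := by
    rw [dotProduct_smul, hv, smul_eq_mul, mul_one]
  rw [h2]; ring

/-! ### Rank of the adjugate of a singular matrix -/

lemma rank_add_le_matrix (M E : Matrix (Fin m) (Fin m) ℂ) :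
    (M + E).rank ≤ M.rank + E.rank := by
  rw [Matrix.rank, Matrix.rank, Matrix.rank, mulVecLin_add]
  have hle : LinearMap.range (M.mulVecLin + E.mulVecLin)
      ≤ LinearMap.range M.mulVecLin ⊔ LinearMap.range E.mulVecLin := by
    rintro x ⟨y, rfl⟩
    exact Submodule.add_mem_sup (LinearMap.mem_range_self _ y) (LinearMap.mem_range_self _ y)
  calc Module.finrank ℂ (LinearMap.range (M.mulVecLin + E.mulVecLin))
      ≤ Module.finrank ℂ ↥(LinearMap.range M.mulVecLin ⊔ LinearMap.range E.mulVecLin) :=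
        Submodule.finrank_mono hle
    _ ≤ _ := (Submodule.finrank_add_le_finrank_add_finrank _ _).trans (by simp)

lemma rank_updateRow_le (M : Matrix (Fin m) (Fin m) ℂ) (j : Fin m) (v : Fin m → ℂ) :
    (M.updateRow j v).rank ≤ M.rank + 1 := by
  have hdecomp : M.updateRow j v = M + vecMulVec (Pi.single j 1) (v - M j) := by
    ext i k
    by_cases h : i = j
    · subst h; simp [updateRow_apply, vecMulVec_apply, Pi.single_apply]
    · simp [updateRow_apply, h, vecMulVec_apply, Pi.single_apply]
  rw [hdecomp]
  refine (rank_add_le_matrix _ _).trans ?_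
  have := rank_vecMulVec_le (Pi.single j (1:ℂ)) (v - M j)
  omega

lemma rank_adjugate_le_one (M : Matrix (Fin m) (Fin m) ℂ) (h : M.det = 0) :
    M.adjugate.rank ≤ 1 := by
  by_cases h2 : m ≤ M.rank + 1
  · have hmul : M * M.adjugate = 0 := by
      rw [mul_adjugate, h, zero_smul]
    have := Matrix.rank_add_rank_le_card_of_mul_eq_zero hmul
    simp only [Fintype.card_fin] at this
    omega
  · have hadj : M.adjugate = 0 := by
      ext i j
      rw [adjugate_apply]
      by_contra hne
      have hunit : IsUnit (M.updateRow j (Pi.single i 1)) := by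
        rw [Matrix.isUnit_iff_isUnit_det]
        exact isUnit_iff_ne_zero.mpr hne
      have hr := Matrix.rank_of_isUnit _ hunit
      have hle := rank_updateRow_le M j (Pi.single i 1)
      rw [hr, Fintype.card_fin] at hle
      omega
    rw [hadj, rank_zero]
    omega

/-! ### Columns of a rank-one matrix are parallel -/

lemma columns_parallel (M : Matrix (Fin m) (Fin m) ℂ) (hr : M.rank ≤ 1) (j0 : Fin m)
    (hw : (fun i => M i j0) ≠ 0) : ∀ j, ∃ α : ℂ, ∀ i, M i j = α * M i j0 := by
  set W := LinearMap.range M.mulVecLin with hW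
  have hcol : ∀ j : Fin m, (fun i => M i j) ∈ W := by
    intro j
    refine ⟨Pi.single j 1, ?_⟩
    ext i
    simp [mulVecLin_apply, mulVec_single]
  have hspan : Submodule.span ℂ {(fun i => M i j0)} = W := by
    refine Submodule.eq_of_le_of_finrank_le ?_ ?_
    · rw [Submodule.span_le, Set.singleton_subset_iff]; exact hcol j0
    · rw [finrank_span_singleton hw]
      exact hr
  intro j
  have hmem := hcol j
  rw [← hspan, Submodule.mem_span_singleton] at hmem
  obtain ⟨a, ha⟩ := hmem
  exact ⟨a, fun i => by have := congrFun ha i; simpa [eq_comm] using this.symm⟩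

lemma unit_vec_of_ne_zero (w : Fin m → ℂ) (hw : w ≠ 0) :
    ∃ r : ℝ, 0 < r ∧ star ((r:ℂ) • w) ⬝ᵥ ((r:ℂ) • w) = 1 := by
  set s : ℝ := ∑ i, Complex.normSq (w i) with hs
  have hspos : 0 < s := by
    obtain ⟨i, hi⟩ := Function.ne_iff.mp hw
    refine Finset.sum_pos' (fun j _ => Complex.normSq_nonneg _) ⟨i, Finset.mem_univ i, ?_⟩
    simpa [Complex.normSq_pos] using hi
  refine ⟨(Real.sqrt s)⁻¹, by positivity, ?_⟩
  have hdot : star w ⬝ᵥ w = (s : ℂ) := by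
    simp only [dotProduct, Pi.star_apply, Complex.star_def,
      ← Complex.normSq_eq_conj_mul_self, hs]
    push_cast
    ring
  rw [star_smul, smul_dotProduct, dotProduct_smul, hdot]
  simp only [Complex.star_def, Complex.conj_ofReal, smul_eq_mul]
  have h1 : (Real.sqrt s)⁻¹ * ((Real.sqrt s)⁻¹ * s) = 1 := by
    rw [← mul_assoc, ← mul_inv, Real.mul_self_sqrt hspos.le, inv_mul_cancel₀ hspos.ne']
  calc (((Real.sqrt s)⁻¹ : ℝ) : ℂ) * ((((Real.sqrt s)⁻¹ : ℝ) : ℂ) * (s : ℂ))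
      = (((Real.sqrt s)⁻¹ * ((Real.sqrt s)⁻¹ * s) : ℝ) : ℂ) := by push_cast; ring
    _ = 1 := by rw [h1]; norm_num

lemma projP_mul_of_cols (v : Fin m → ℂ) (hv : star v ⬝ᵥ v = 1)
    (M : Matrix (Fin m) (Fin m) ℂ) (hcols : ∀ j, ∃ α : ℂ, ∀ i, M i j = α * v i) :
    vecMulVec v (star v) * M = M := by
  ext i j
  obtain ⟨α, hα⟩ := hcols j
  rw [mul_apply]
  have h1 : ∀ k, vecMulVec v (star v) i k * M k j = (α * v i) * (star v k * v k) := by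
    intro k; rw [vecMulVec_apply, hα k]; ring
  rw [Finset.sum_congr rfl fun k _ => h1 k, ← Finset.mul_sum]
  have h2 : ∑ k, star v k * v k = 1 := hv
  rw [h2, mul_one, hα i]

lemma mul_projP_eq_zero (A0 : Matrix (Fin m) (Fin m) ℂ) (v : Fin m → ℂ)
    (hv0 : A0 *ᵥ v = 0) : A0 * vecMulVec v (star v) = 0 := by
  ext i j
  rw [mul_apply]
  have h1 : ∀ k, A0 i k * vecMulVec v (star v) k j = (A0 i k * v k) * star v j := by
    intro k; rw [vecMulVec_apply]; ring
  rw [Finset.sum_congr rfl fun k _ => h1 k, ← Finset.sum_mul]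
  have h2 : ∑ k, A0 i k * v k = 0 := congrFun hv0 i
  rw [h2, zero_mul]
  rfl

/-! ### Continuity and evaluation at `0` -/

lemma mpEval_continuous (N : ℕ) (A : ℕ → Matrix (Fin m) (Fin m) ℂ) :
    Continuous fun z => mpEval N A z := by
  unfold mpEval
  exact continuous_finset_sum _ fun k _ => (continuous_pow k).smul continuous_const

lemma mpEval_zero (N : ℕ) (A : ℕ → Matrix (Fin m) (Fin m) ℂ) :
    mpEval N A 0 = A 0 := by
  unfold mpEval
  rw [Finset.sum_eq_single 0]
  · simp
  · intro k _ hk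
    rw [zero_pow hk, zero_smul]
  · intro h; simp at h

lemma det_A0_eq_zero (N : ℕ) (hN : N ≠ 0) (A : ℕ → Matrix (Fin m) (Fin m) ℂ)
    (hdet : ∀ z : ℂ, z ≠ 0 → (mpEval N A z).det = z ^ N) : (A 0).det = 0 := by
  have hfg : (fun z => (mpEval N A z).det) = fun z : ℂ => z ^ N := by
    refine Continuous.ext_on (dense_compl_singleton (0:ℂ))
      (mpEval_continuous N A).matrix_det (continuous_pow N) ?_
    intro z hz
    exact hdet z hz
  have h0 := congrFun hfg 0
  rw [mpEval_zero] at h0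
  rw [h0, zero_pow hN]

lemma adjugate_A0 (N : ℕ) (A : ℕ → Matrix (Fin m) (Fin m) ℂ)
    (hpara : IsParaunitary N A)
    (hdet : ∀ z : ℂ, z ≠ 0 → (mpEval N A z).det = z ^ N) :
    (A 0).adjugate = (A N)ᴴ := by
  have hfg : (fun z => (mpEval N A z).adjugate)
      = fun z : ℂ => ∑ k ∈ Finset.range (N + 1), z ^ (N - k) • (A k)ᴴ := by
    refine Continuous.ext_on (dense_compl_singleton (0:ℂ))
      (mpEval_continuous N A).matrix_adjugate
      (continuous_finset_sum _ fun k _ => (continuous_pow (N - k)).smul continuous_const) ?_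
    intro z hz
    have hAB := hpara z hz
    have hBA : mpAdjEval N A z * mpEval N A z = 1 := mul_eq_one_comm.mp hAB
    have hma : mpEval N A z * (mpEval N A z).adjugate = (z ^ N) • 1 := by
      rw [mul_adjugate, hdet z hz]
    have key : (mpEval N A z).adjugate = z ^ N • mpAdjEval N A z := by
      calc (mpEval N A z).adjugate = 1 * (mpEval N A z).adjugate := (one_mul _).symm
        _ = mpAdjEval N A z * (mpEval N A z * (mpEval N A z).adjugate) := by
            rw [← mul_assoc, hBA]
        _ = mpAdjEval N A z * ((z ^ N) • 1) := by rw [hma]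
        _ = z ^ N • mpAdjEval N A z := by rw [mul_smul_comm, mul_one]
    show (mpEval N A z).adjugate = ∑ k ∈ Finset.range (N + 1), z ^ (N - k) • (A k)ᴴ
    rw [key]
    unfold mpAdjEval
    rw [Finset.smul_sum]
    refine Finset.sum_congr rfl fun k hk => ?_
    rw [smul_smul]
    congr 1
    rw [Finset.mem_range] at hk
    rw [inv_pow, ← pow_sub₀ z hz (by omega)]
  have h0 := congrFun hfg 0
  rw [mpEval_zero] at h0
  rw [h0, Finset.sum_eq_single N]
  · simp
  · intro k hk hkN
    rw [Finset.mem_range] at hk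
    rw [zero_pow (by omega), zero_smul]
  · intro h; simp at h

/-! ### The key product identities -/

section core
variable {P : Matrix (Fin m) (Fin m) ℂ}

lemma fac_sub_mul (hPP : P * P = P) : ((1:Matrix (Fin m) (Fin m) ℂ) - P) * (1 - P) = 1 - P := by
  rw [sub_mul, one_mul, mul_sub, mul_one, hPP, sub_self, sub_zero]

lemma fac_P_sub (hPP : P * P = P) : P * ((1:Matrix (Fin m) (Fin m) ℂ) - P) = 0 := by
  rw [mul_sub, mul_one, hPP, sub_self]

lemma fac_sub_P (hPP : P * P = P) : ((1:Matrix (Fin m) (Fin m) ℂ) - P) * P = 0 := by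
  rw [sub_mul, one_mul, hPP, sub_self]

lemma fac_mul_fac (hPP : P * P = P) {a b : ℂ} (hab : a * b = 1) :
    (1 - P + a • P) * (1 - P + b • P) = 1 := by
  rw [add_mul, mul_add, mul_add, fac_sub_mul hPP, smul_mul_assoc, smul_mul_assoc,
    mul_smul_comm, fac_sub_P hPP, fac_P_sub hPP, smul_zero, smul_zero,
    add_zero, zero_add]
  rw [mul_smul_comm, smul_smul, hPP, hab, one_smul]
  abel

lemma key_identity (hPP : P * P = P) (n : ℕ) (A : ℕ → Matrix (Fin m) (Fin m) ℂ)
    (hAPtop : A (n+1) * P = A (n+1)) (hA0P : A 0 * P = 0) (z : ℂ) :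
    mpEval (n+1) A z
      = mpEval n (fun k => A k * (1 - P) + A (k+1) * P) z * (1 - P + z • P) := by
  unfold mpEval
  rw [Finset.sum_mul]
  have hterm : ∀ k ∈ Finset.range (n+1),
      (z ^ k • (A k * (1 - P) + A (k+1) * P)) * (1 - P + z • P)
      = z ^ k • (A k * (1 - P)) + z ^ (k+1) • (A (k+1) * P) := by
    intro k _
    have e1 : (A k * (1 - P) + A (k+1) * P) * (1 - P + z • P)
        = A k * (1 - P) + z • (A (k+1) * P) := by
      simp only [add_mul, mul_add, mul_smul_comm, mul_assoc, fac_sub_mul hPP,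
        fac_P_sub hPP, fac_sub_P hPP, hPP, mul_zero, smul_zero, add_zero, zero_add]
    rw [smul_mul_assoc, e1, smul_add, smul_smul, ← pow_succ]
  rw [Finset.sum_congr rfl hterm, Finset.sum_add_distrib]
  have hsplit : ∀ k ∈ Finset.range (n+1+1),
      z ^ k • A k = z ^ k • (A k * (1 - P)) + z ^ k • (A k * P) := by
    intro k _
    rw [← smul_add, ← mul_add]
    simp
  rw [Finset.sum_congr rfl hsplit, Finset.sum_add_distrib]
  congr 1
  · rw [Finset.sum_range_succ]
    have h2 : A (n+1) * (1 - P) = 0 := by rw [mul_sub, mul_one, hAPtop, sub_self]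
    rw [h2, smul_zero, add_zero]
  · rw [Finset.sum_range_succ']
    have h2 : z ^ 0 • (A 0 * P) = 0 := by rw [hA0P, smul_zero]
    rw [h2, add_zero]

lemma adj_identity (hPP : P * P = P) (hPH : Pᴴ = P) (n : ℕ)
    (A : ℕ → Matrix (Fin m) (Fin m) ℂ)
    (hAPtop : A (n+1) * P = A (n+1)) (hA0P : A 0 * P = 0) (z : ℂ) (hz : z ≠ 0) :
    mpAdjEval n (fun k => A k * (1 - P) + A (k+1) * P) z
      = (1 - P + z • P) * mpAdjEval (n+1) A z := by
  have htopH : ((1:Matrix (Fin m) (Fin m) ℂ) - P) * (A (n+1))ᴴ = 0 := by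
    have h2 : P * (A (n+1))ᴴ = (A (n+1))ᴴ := by
      rw [← hPH, ← conjTranspose_mul, hAPtop]
    rw [sub_mul, one_mul, h2, sub_self]
  have hzeroH : P * (A 0)ᴴ = 0 := by
    rw [← hPH, ← conjTranspose_mul, hA0P, conjTranspose_zero]
  unfold mpAdjEval
  rw [Finset.mul_sum]
  have hterm : ∀ k ∈ Finset.range (n+1+1),
      (1 - P + z • P) * ((z⁻¹) ^ k • (A k)ᴴ)
      = (z⁻¹) ^ k • ((1 - P) * (A k)ᴴ) + (z * (z⁻¹)^k) • (P * (A k)ᴴ) := by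
    intro k _
    rw [add_mul, mul_smul_comm, mul_smul_comm, smul_mul_assoc, smul_smul,
      mul_comm ((z:ℂ)⁻¹ ^ k) z]
  rw [Finset.sum_congr rfl hterm, Finset.sum_add_distrib]
  have hfirst : ∑ k ∈ Finset.range (n+1+1), (z⁻¹) ^ k • ((1 - P) * (A k)ᴴ)
      = ∑ k ∈ Finset.range (n+1), (z⁻¹) ^ k • ((1 - P) * (A k)ᴴ) := by
    rw [Finset.sum_range_succ, htopH, smul_zero, add_zero]
  have hsecond : ∑ k ∈ Finset.range (n+1+1), (z * (z⁻¹)^k) • (P * (A k)ᴴ)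
      = ∑ k ∈ Finset.range (n+1), (z⁻¹) ^ k • (P * (A (k+1))ᴴ) := by
    rw [Finset.sum_range_succ']
    have h0 : (z * (z⁻¹)^0) • (P * (A 0)ᴴ) = 0 := by rw [hzeroH, smul_zero]
    rw [h0, add_zero]
    refine Finset.sum_congr rfl fun k _ => ?_
    congr 1
    rw [pow_succ, ← mul_assoc, mul_comm z, mul_assoc, mul_inv_cancel₀ hz, mul_one]
  rw [hfirst, hsecond, ← Finset.sum_add_distrib]
  refine Finset.sum_congr rfl fun k _ => ?_
  rw [← smul_add]
  congr 1
  rw [conjTranspose_add, conjTranspose_mul, conjTranspose_mul, conjTranspose_sub,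
    conjTranspose_one, hPH]

end core

/-! ### The main induction -/

theorem aux : ∀ (N : ℕ) (A : ℕ → Matrix (Fin m) (Fin m) ℂ),
    IsParaunitary N A → A N ≠ 0 →
    (∀ z : ℂ, z ≠ 0 → (mpEval N A z).det = z ^ N) →
    mpEval N A 1 = 1 →
    ∃ P : ℕ → Matrix (Fin m) (Fin m) ℂ,
      (∀ j < N, (P j)ᴴ = P j ∧ P j * P j = P j ∧ (P j).rank = 1) ∧
      (∀ j, j + 1 < N → P j * P (j + 1) ≠ 0) ∧
      (∀ z : ℂ, mpEval N A z = ((List.range N).map (fun j => 1 - P j + z • P j)).prod) ∧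
      (N ≠ 0 → A N * P (N - 1) = A N) := by
  intro N
  induction N with
  | zero =>
    intro A _ _ _ h1
    have hA0 : A 0 = 1 := by
      have := h1
      unfold mpEval at this
      simpa using this
    refine ⟨fun _ => 0, ?_, ?_, ?_, ?_⟩
    · intro j hj; omega
    · intro j hj; omega
    · intro z
      unfold mpEval
      simpa [hA0] using rfl
    · intro h; exact absurd rfl h
  | succ n ih =>
    intro A hpara hAN hdet h1
    -- the structure matrices
    have hdet0 : (A 0).det = 0 := det_A0_eq_zero (n+1) (by omega) A hdet
    have hadj : (A 0).adjugate = (A (n+1))ᴴ := adjugate_A0 (n+1) A hpara hdet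
    set M : Matrix (Fin m) (Fin m) ℂ := (A (n+1))ᴴ with hM
    have hMne : M ≠ 0 := by
      intro h2
      apply hAN
      have := congrArg conjTranspose h2
      simpa [hM] using this
    have hrank : M.rank ≤ 1 := by
      rw [← hadj]; exact rank_adjugate_le_one _ hdet0
    -- a nonzero column of M
    obtain ⟨i0, j0, hij⟩ : ∃ i j, M i j ≠ 0 := by
      by_contra hc
      push_neg at hc
      exact hMne (by ext i j; exact hc i j)
    set w : Fin m → ℂ := fun i => M i j0 with hwdef
    have hw : w ≠ 0 := by
      intro h2
      exact hij (by simpa [hwdef] using congrFun h2 i0)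
    have hcols := columns_parallel M hrank j0 hw
    obtain ⟨r, hrpos, hv⟩ := unit_vec_of_ne_zero w hw
    set v : Fin m → ℂ := (r:ℂ) • w with hvdef
    have hrne : (r:ℂ) ≠ 0 := by
      simpa using hrpos.ne'
    have hvcols : ∀ j, ∃ α : ℂ, ∀ i, M i j = α * v i := by
      intro j
      obtain ⟨α, hα⟩ := hcols j
      refine ⟨α * (r:ℂ)⁻¹, fun i => ?_⟩
      rw [hα i]
      have : v i = (r:ℂ) * w i := rfl
      rw [this]
      have hwi : w i = M i j0 := rfl
      rw [hwi]
      field_simp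
    set P : Matrix (Fin m) (Fin m) ℂ := vecMulVec v (star v) with hPdef
    have hPH : Pᴴ = P := projP_conjTranspose v
    have hPP : P * P = P := projP_idem v hv
    have hPrank : P.rank = 1 := projP_rank v hv
    have hPM : P * M = M := projP_mul_of_cols v hv M hvcols
    have hAP : A (n+1) * P = A (n+1) := by
      have h2 := congrArg conjTranspose hPM
      rw [conjTranspose_mul, hPH, hM, conjTranspose_conjTranspose] at h2
      exact h2
    have hA0v : A 0 *ᵥ v = 0 := by
      have hw_eq : w = (A 0).adjugate *ᵥ Pi.single j0 1 := by
        funext i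
        simp [hwdef, mulVec_single, hadj]
      have hAadj : A 0 * (A 0).adjugate = 0 := by
        rw [mul_adjugate, hdet0, zero_smul]
      have hA0w : A 0 *ᵥ w = 0 := by
        rw [hw_eq, mulVec_mulVec, hAadj, zero_mulVec]
      rw [hvdef, mulVec_smul, hA0w, smul_zero]
    have hA0P : A 0 * P = 0 := mul_projP_eq_zero (A 0) v hA0v
    -- the quotient polynomial
    set B : ℕ → Matrix (Fin m) (Fin m) ℂ := fun k => A k * (1 - P) + A (k+1) * P with hBdef
    have hkey : ∀ z : ℂ, mpEval (n+1) A z = mpEval n B z * (1 - P + z • P) :=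
      key_identity hPP n A hAP hA0P
    have hBnP : B n * P = A (n+1) := by
      show (A n * (1 - P) + A (n+1) * P) * P = A (n+1)
      rw [add_mul, mul_assoc, fac_sub_P hPP, mul_zero, zero_add, mul_assoc, hPP, hAP]
    have hBeval : ∀ z : ℂ, z ≠ 0 → mpEval n B z = mpEval (n+1) A z * (1 - P + z⁻¹ • P) := by
      intro z hz
      have h2 := hkey z
      have h3 : (1 - P + z • P) * (1 - P + z⁻¹ • P) = 1 :=
        fac_mul_fac hPP (mul_inv_cancel₀ hz)
      calc mpEval n B z = mpEval n B z * ((1 - P + z • P) * (1 - P + z⁻¹ • P)) := by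
            rw [h3, mul_one]
        _ = (mpEval n B z * (1 - P + z • P)) * (1 - P + z⁻¹ • P) := by rw [mul_assoc]
        _ = mpEval (n+1) A z * (1 - P + z⁻¹ • P) := by rw [← h2]
    have hBpara : IsParaunitary n B := by
      intro z hz
      rw [hBeval z hz, adj_identity hPP hPH n A hAP hA0P z hz]
      have h3 : (1 - P + z⁻¹ • P) * (1 - P + z • P) = 1 :=
        fac_mul_fac hPP (inv_mul_cancel₀ hz)
      calc (mpEval (n+1) A z * (1 - P + z⁻¹ • P)) * ((1 - P + z • P) * mpAdjEval (n+1) A z)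
          = mpEval (n+1) A z * (((1 - P + z⁻¹ • P) * (1 - P + z • P)) * mpAdjEval (n+1) A z) := by
            rw [mul_assoc, mul_assoc]
        _ = mpEval (n+1) A z * mpAdjEval (n+1) A z := by rw [h3, one_mul]
        _ = 1 := hpara z hz
    have hBdet : ∀ z : ℂ, z ≠ 0 → (mpEval n B z).det = z ^ n := by
      intro z hz
      have h2 := congrArg det (hkey z)
      rw [det_mul, hdet z hz] at h2
      have h3 : (1 - P + z • P).det = z := det_one_sub_add_smul v z hv
      rw [h3] at h2
      have h4 : z ^ (n+1) = z ^ n * z := pow_succ z n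
      rw [h4] at h2
      exact (mul_right_cancel₀ hz h2.symm)
    have hB1 : mpEval n B 1 = 1 := by
      have h2 := hkey 1
      rw [h1] at h2
      have h3 : (1 : Matrix (Fin m) (Fin m) ℂ) - P + (1:ℂ) • P = 1 := by
        rw [one_smul, sub_add_cancel]
      rw [h3, mul_one] at h2
      exact h2.symm
    have hBn : B n ≠ 0 := by
      intro h0
      apply hAN
      rw [← hBnP, h0, zero_mul]
    obtain ⟨P', hP'1, hP'2, hP'3, hP'4⟩ := ih B hBpara hBn hBdet hB1
    refine ⟨fun j => if j = n then P else P' j, ?_, ?_, ?_, ?_⟩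
    · intro j hj
      by_cases hjn : j = n
      · subst hjn
        simp only [if_pos rfl]
        exact ⟨hPH, hPP, hPrank⟩
      · simp only [if_neg hjn]
        exact hP'1 j (by omega)
    · intro j hj
      by_cases hjn : j + 1 = n
      · have hj_ne : j ≠ n := by omega
        simp only [if_neg hj_ne, if_pos hjn]
        intro hQP0
        have hn0 : n ≠ 0 := by omega
        have hBQ : B n * P' (n - 1) = B n := hP'4 hn0
        have hjn1 : j = n - 1 := by omega
        have h5 : B n * P = 0 := by
          calc B n * P = (B n * P' (n-1)) * P := by rw [hBQ]
            _ = B n * (P' (n-1) * P) := by rw [mul_assoc]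
            _ = B n * (P' j * P) := by rw [← hjn1]
            _ = 0 := by rw [hQP0, mul_zero]
        rw [hBnP] at h5
        exact hAN h5
      · have h6 : j + 1 < n := by omega
        simp only [if_neg (by omega : j ≠ n), if_neg hjn]
        exact hP'2 j h6
    · intro z
      rw [hkey z, hP'3 z, List.range_succ, List.map_append, List.prod_append]
      simp only [List.map_cons, List.map_nil, List.prod_cons, List.prod_nil, mul_one,
        if_pos rfl]
      congr 1
      refine congrArg _ (List.map_congr_left ?_)
      intro j hj
      rw [List.mem_range] at hj
      rw [if_neg (by omega : j ≠ n)]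
    · intro _
      simp only [Nat.add_sub_cancel, if_pos rfl]
      exact hAP

end Stmt5Aux

theorem stmt_5 {m N : ℕ} (A : ℕ → Matrix (Fin m) (Fin m) ℂ)
    (hpara : IsParaunitary N A) (hAN : A N ≠ 0) (c : ℂ)
    (hdet : ∀ z : ℂ, z ≠ 0 → (mpEval N A z).det = c * z ^ N)
    (h1 : mpEval N A 1 = 1) :
    ∃ P : ℕ → Matrix (Fin m) (Fin m) ℂ,
      (∀ j < N, (P j)ᴴ = P j ∧ P j * P j = P j ∧ (P j).rank = 1) ∧
      (∀ j, j + 1 < N → P j * P (j + 1) ≠ 0) ∧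
      ∀ z : ℂ, mpEval N A z = ((List.range N).map (fun j => 1 - P j + z • P j)).prod := by
  have hc : c = 1 := by
    have h2 := hdet 1 one_ne_zero
    rw [h1, det_one] at h2
    simpa using h2.symm
  have hdet' : ∀ z : ℂ, z ≠ 0 → (mpEval N A z).det = z ^ N := by
    intro z hz
    rw [hdet z hz, hc, one_mul]
  obtain ⟨P, hP1, hP2, hP3, _⟩ := Stmt5Aux.aux N A hpara hAN hdet' h1
  exact ⟨P, hP1, hP2, hP3⟩
end

section
/- Let A(z) be a wavelet matrix of rank m, order N and degree N satisfying A(1) = I_m. If P_1, …, P_N and P'_1, …, P'_N are two sequences of rank-one orthogonal projections on ℂ^m such that A(z) = ∏_{j=1}^N (I_m − P_j + P_j z) = ∏_{j=1}^N (I_m − P'_j + P'_j z) for all z ∈ ℂ, then P_j = P'_j for every j = 1, …, N. -/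
open Matrix BigOperators

section Aux
open Polynomial




namespace Stmt6Aux

variable {m : ℕ}

abbrev Mat (m : ℕ) := Matrix (Fin m) (Fin m) ℂ

noncomputable def phi (z : ℂ) : (Mat m)[X] →+* Mat m :=
  eval₂RingHom' (RingHom.id _) (z • 1) (fun a => ((Commute.one_right a).smul_right z))

lemma phi_C (z : ℂ) (a : Mat m) : phi z (C a) = a := by
  simp [phi]

lemma phi_X (z : ℂ) : phi (m := m) z X = z • 1 := by
  simp [phi]

lemma phi_monomial (z : ℂ) (k : ℕ) (a : Mat m) :
    phi z (monomial k a) = z ^ k • a := by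
  rw [← C_mul_X_pow_eq_monomial, _root_.map_mul, _root_.map_pow, phi_C, phi_X,
    _root_.smul_pow, one_pow, mul_smul_comm, mul_one]

noncomputable def fP (P : Mat m) : (Mat m)[X] := C (1 - P) + C P * X

lemma phi_fP (z : ℂ) (P : Mat m) : phi z (fP P) = 1 - P + z • P := by
  rw [fP, _root_.map_add, _root_.map_mul, phi_C, phi_C, phi_X, mul_smul_comm, mul_one]

lemma phi_list_prod (z : ℂ) (L : List (Mat m)) :
    phi z (L.map fP).prod = (L.map fun Q => 1 - Q + z • Q).prod := by
  have hc : (phi (m := m) z) ∘ fP = fun Q => 1 - Q + z • Q := funext fun Q => phi_fP z Q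
  rw [map_list_prod, List.map_map, hc]

lemma phi_eq_sum (z : ℂ) (p : (Mat m)[X]) :
    phi z p = ∑ k ∈ Finset.range (p.natDegree + 1), z ^ k • p.coeff k := by
  conv_lhs => rw [p.as_sum_range' (p.natDegree + 1) (Nat.lt_succ_self _)]
  rw [_root_.map_sum]
  exact Finset.sum_congr rfl fun k _ => phi_monomial z k _

lemma phi_inj {p q : (Mat m)[X]} (h : ∀ z, phi z p = phi z q) : p = q := by
  have hz : ∀ z : ℂ, phi z (p - q) = 0 := fun z => by rw [_root_.map_sub, h z, sub_self]
  set r := p - q with hr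
  have hr0 : r = 0 := by
    ext1 n
    rw [coeff_zero]
    ext i j
    simp only [Matrix.zero_apply]
    set s : ℂ[X] := ∑ k ∈ Finset.range (r.natDegree + 1), monomial k (r.coeff k i j) with hs
    have hse : ∀ z : ℂ, s.eval z = 0 := by
      intro z
      have h0 := hz z
      rw [phi_eq_sum] at h0
      have h1 := congrFun (congrFun h0 i) j
      simp only [Matrix.sum_apply, Matrix.smul_apply, smul_eq_mul, Matrix.zero_apply] at h1
      rw [hs, eval_finset_sum, ← h1]
      refine Finset.sum_congr rfl fun k _ => ?_
      rw [eval_monomial, mul_comm]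
    have hs0 : s = 0 := Polynomial.funext fun z => by rw [hse z, eval_zero]
    have hcoeff : s.coeff n = if n ∈ Finset.range (r.natDegree + 1)
        then r.coeff n i j else 0 := by
      rw [hs, finset_sum_coeff]
      simp only [coeff_monomial]
      exact Finset.sum_ite_eq' _ _ _
    by_cases hn : n ∈ Finset.range (r.natDegree + 1)
    · have h2 := hcoeff
      rw [hs0, coeff_zero, if_pos hn] at h2
      exact h2.symm
    · have h3 : r.coeff n = 0 := by
        apply coeff_eq_zero_of_natDegree_lt
        simp only [Finset.mem_range, not_lt] at hn
        omega
      rw [h3]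
      rfl
  exact sub_eq_zero.mp hr0

lemma natDegree_fP (P : Mat m) : (fP P).natDegree ≤ 1 := by
  apply (natDegree_add_le _ _).trans
  apply max_le
  · simp
  · exact (natDegree_mul_le).trans (by simpa using natDegree_X_le)

lemma natDegree_prod_le (L : List (Mat m)) :
    ((L.map fP).prod).natDegree ≤ L.length := by
  apply (natDegree_list_prod_le _).trans
  rw [List.map_map]
  apply (List.sum_le_card_nsmul _ 1 ?_).trans
  · simp
  · intro x hx
    simp only [List.mem_map, Function.comp] at hx
    obtain ⟨Q, _, rfl⟩ := hx
    exact natDegree_fP Q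

lemma coeff_prod_top (L : List (Mat m)) :
    ((L.map fP).prod).coeff L.length = L.prod := by
  induction L with
  | nil => simp
  | cons Q L ih =>
    have hdeg : ((L.map fP).prod).natDegree ≤ L.length := natDegree_prod_le L
    simp only [List.map_cons, List.prod_cons, List.length_cons]
    rw [fP, add_mul, coeff_add]
    have h1 : (C (1 - Q) * (L.map fP).prod).coeff (L.length + 1) = 0 := by
      rw [coeff_C_mul, coeff_eq_zero_of_natDegree_lt (by omega), mul_zero]
    have h2 : (C Q * X * (L.map fP).prod).coeff (L.length + 1) = Q * L.prod := by
      rw [mul_assoc, coeff_C_mul, coeff_X_mul, ih]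
    rw [h1, h2, zero_add]

/-- left-cancellation of `fP P` when `P` is idempotent -/
lemma fP_cancel {P : Mat m} (hP2 : P * P = P) {a b : (Mat m)[X]}
    (h : fP P * a = fP P * b) : a = b := by
  have e1 : P * (1 - P) = 0 := by rw [mul_sub, mul_one, hP2, sub_self]
  have e2 : (1 - P) * P = 0 := by rw [sub_mul, one_mul, hP2, sub_self]
  have e4 : P * (1 - P) + (1 - P) * P = 0 := by rw [e1, e2, add_zero]
  have hlin : ∀ a b c d : Mat m, (C a + C b * X) * (C c + C d * X)
      = C (a * c) + C (a * d + b * c) * X + C (b * d) * X ^ 2 := by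
    intro a b c d
    have h1 : C b * X * C c = C (b * c) * X := by
      rw [mul_assoc, X_mul_C, ← mul_assoc, ← _root_.map_mul]
    have h2 : C b * X * (C d * X) = C (b * d) * X ^ 2 := by
      rw [mul_assoc, ← mul_assoc X (C d) X, X_mul_C, mul_assoc (C d) X X,
        ← mul_assoc (C b) (C d) (X * X), ← _root_.map_mul, ← sq]
    rw [add_mul, mul_add, mul_add, ← _root_.map_mul, ← mul_assoc, ← _root_.map_mul,
      h1, h2, _root_.map_add, add_mul]
    abel
  have hg : (C P + C (1 - P) * X) * fP P = X := by
    have e3 : P * P + (1 - P) * (1 - P) = 1 := by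
      rw [hP2, sub_mul, one_mul, mul_sub, mul_one, hP2, sub_self, sub_zero, add_sub_cancel]
    rw [fP, hlin, e1, e2, e3, _root_.map_zero, _root_.map_one, one_mul, zero_add,
      zero_mul, add_zero]
  have hx : X * a = X * b := by
    calc X * a = (C P + C (1 - P) * X) * (fP P * a) := by rw [← mul_assoc, hg]
    _ = (C P + C (1 - P) * X) * (fP P * b) := by rw [h]
    _ = X * b := by rw [← mul_assoc, hg]
  ext1 n
  have := congrArg (fun p => coeff p (n + 1)) hx
  simpa [coeff_X_mul] using this

/-- A rank-one hermitian idempotent is determined by any nonzero matrix it fixes. -/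
lemma proj_unique {P P' E : Mat m} (hPh : Pᴴ = P) (hP2 : P * P = P) (hPr : P.rank = 1)
    (hP'h : P'ᴴ = P') (hP'2 : P' * P' = P') (hP'r : P'.rank = 1)
    (hE : E ≠ 0) (h1 : P * E = E) (h2 : P' * E = E) : P = P' := by
  -- ranges coincide
  have hrange : ∀ (Q : Mat m), Q * Q = Q → Q.rank = 1 → Q * E = E →
      LinearMap.range Q.mulVecLin = LinearMap.range E.mulVecLin := by
    intro Q hQ2 hQr hQE
    have hle : LinearMap.range E.mulVecLin ≤ LinearMap.range Q.mulVecLin := by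
      rintro x ⟨v, rfl⟩
      exact ⟨E.mulVec v, by rw [mulVecLin_apply, mulVecLin_apply, mulVec_mulVec, hQE]⟩
    have hErank : 0 < E.rank := by
      obtain ⟨i, j, hij⟩ : ∃ i j, E i j ≠ 0 := by
        by_contra hcon
        push_neg at hcon
        exact hE (Matrix.ext fun i j => hcon i j)
      have hmem : E.mulVec (Pi.single j 1) ∈ LinearMap.range E.mulVecLin :=
        ⟨Pi.single j 1, rfl⟩
      have hne : E.mulVec (Pi.single j 1) ≠ 0 := by
        intro h0
        apply hij
        have := congrFun h0 i
        rwa [mulVec_single_one, col_apply] at this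
      rw [Matrix.rank]
      rw [Module.finrank_pos_iff_exists_ne_zero]
      exact ⟨⟨_, hmem⟩, fun h0 => hne (by simpa [Submodule.mk_eq_zero] using h0)⟩
    exact (Submodule.eq_of_le_of_finrank_le hle
      (show Q.rank ≤ E.rank by omega)).symm
  have hrr : LinearMap.range P.mulVecLin = LinearMap.range P'.mulVecLin := by
    rw [hrange P hP2 hPr h1, hrange P' hP'2 hP'r h2]
  -- P' * P = P
  have key : ∀ (Q R : Mat m), Q * Q = Q → R * R = R →
      LinearMap.range Q.mulVecLin = LinearMap.range R.mulVecLin → R * Q = Q := by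
    intro Q R hQ2 hR2 hQR
    have hfix : ∀ v, R.mulVec (Q.mulVec v) = Q.mulVec v := by
      intro v
      have : Q.mulVec v ∈ LinearMap.range R.mulVecLin := by
        rw [← hQR]; exact ⟨v, rfl⟩
      obtain ⟨w, hw⟩ := this
      rw [mulVecLin_apply] at hw
      rw [← hw, mulVec_mulVec, hR2]
    ext i j
    have h5 := congrFun (hfix (Pi.single j 1)) i
    rwa [mulVec_mulVec, mulVec_single_one, mulVec_single_one, col_apply,
      col_apply] at h5
  have e1 : P' * P = P := key P P' hP2 hP'2 hrr
  have e2 : P * P' = P' := key P' P hP'2 hP2 hrr.symm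
  have h6 := congrArg conjTranspose e1
  rw [conjTranspose_mul, hPh, hP'h, e2] at h6
  exact h6.symm

lemma lists_eq : ∀ (L L' : List (Mat m)),
    L.length = L'.length →
    (∀ Q ∈ L, Qᴴ = Q ∧ Q * Q = Q ∧ Q.rank = 1) →
    (∀ Q ∈ L', Qᴴ = Q ∧ Q * Q = Q ∧ Q.rank = 1) →
    L.prod ≠ 0 →
    (L.map fP).prod = (L'.map fP).prod → L = L' := by
  intro L
  induction L with
  | nil =>
    intro L' hlen _ _ _ _
    exact (List.length_eq_zero_iff.mp hlen.symm).symm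
  | cons Q L ih =>
    intro L' hlen hQL hQL' hprod hfeq
    cases L' with
    | nil => simp at hlen
    | cons Q' L'' =>
      have hQ := hQL Q (List.mem_cons_self (a := Q) (l := L))
      have hQ' := hQL' Q' (List.mem_cons_self (a := Q') (l := L''))
      have hlen' : L.length = L''.length := by simpa using hlen
      -- leading coefficients
      have hc1 : ((List.map fP (Q :: L)).prod).coeff (L.length + 1) = Q * L.prod := by
        have := coeff_prod_top (Q :: L)
        simpa using this
      have hc2 : ((List.map fP (Q' :: L'')).prod).coeff (L.length + 1) = Q' * L''.prod := by
        have := coeff_prod_top (Q' :: L'')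
        rw [List.length_cons, ← hlen'] at this
        simpa using this
      have hE : Q * L.prod = Q' * L''.prod := by rw [← hc1, ← hc2, hfeq]
      set E := Q * L.prod with hEdef
      have hEne : E ≠ 0 := by
        rw [hEdef]
        simpa using hprod
      have hQE : Q * E = E := by rw [hEdef, ← mul_assoc, hQ.2.1]
      have hQ'E : Q' * E = E := by rw [hE, ← mul_assoc, hQ'.2.1, ← hE]
      have hQQ' : Q = Q' := proj_unique hQ.1 hQ.2.1 hQ.2.2 hQ'.1 hQ'.2.1 hQ'.2.2 hEne hQE hQ'E
      -- cancel and recurse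
      have hrest : (L.map fP).prod = (L''.map fP).prod := by
        apply fP_cancel hQ.2.1
        have : (List.map fP (Q :: L)).prod = (List.map fP (Q' :: L'')).prod := hfeq
        simpa [hQQ'] using this
      have hLprod : L.prod ≠ 0 := by
        intro h0
        apply hEne
        rw [hEdef, h0, mul_zero]
      have := ih L'' hlen' (fun R hR => hQL R (List.mem_cons_of_mem _ hR))
        (fun R hR => hQL' R (List.mem_cons_of_mem _ hR)) hLprod hrest
      rw [hQQ', this]

end Stmt6Aux
end Aux


open Stmt6Aux Polynomial in
theorem stmt_6 {m N : ℕ} (A : ℕ → Matrix (Fin m) (Fin m) ℂ)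
    (hpara : IsParaunitary N A) (hAN : A N ≠ 0) (c : ℂ)
    (hdet : ∀ z : ℂ, z ≠ 0 → (mpEval N A z).det = c * z ^ N)
    (h1 : mpEval N A 1 = 1)
    (P P' : ℕ → Matrix (Fin m) (Fin m) ℂ)
    (hP : ∀ j < N, (P j)ᴴ = P j ∧ P j * P j = P j ∧ (P j).rank = 1)
    (hP' : ∀ j < N, (P' j)ᴴ = P' j ∧ P' j * P' j = P' j ∧ (P' j).rank = 1)
    (hfac : ∀ z : ℂ, mpEval N A z = ((List.range N).map (fun j => 1 - P j + z • P j)).prod)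
    (hfac' : ∀ z : ℂ, mpEval N A z = ((List.range N).map (fun j => 1 - P' j + z • P' j)).prod) :
    ∀ j < N, P j = P' j := by
  set L : List (Mat m) := (List.range N).map P with hLdef
  set L' : List (Mat m) := (List.range N).map P' with hL'def
  set q : (Mat m)[X] := ∑ k ∈ Finset.range (N + 1), Polynomial.monomial k (A k) with hqdef
  have hq : ∀ z, phi z q = mpEval N A z := by
    intro z
    rw [hqdef, _root_.map_sum]
    exact Finset.sum_congr rfl fun k _ => phi_monomial z k (A k)
  have hL : ∀ z, phi z ((L.map fP).prod) = mpEval N A z := by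
    intro z
    rw [phi_list_prod, hLdef, List.map_map, hfac z]
    rfl
  have hL' : ∀ z, phi z ((L'.map fP).prod) = mpEval N A z := by
    intro z
    rw [phi_list_prod, hL'def, List.map_map, hfac' z]
    rfl
  have hpq : (L.map fP).prod = q := phi_inj fun z => by rw [hL z, hq z]
  have hpq' : (L'.map fP).prod = q := phi_inj fun z => by rw [hL' z, hq z]
  have hcq : q.coeff N = A N := by
    rw [hqdef, Polynomial.finset_sum_coeff]
    simp only [Polynomial.coeff_monomial]
    rw [Finset.sum_ite_eq' (Finset.range (N + 1)) N (fun k => A k)]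
    simp
  have hlenL : L.length = N := by rw [hLdef, List.length_map, List.length_range]
  have hLprod : L.prod = A N := by
    rw [← hcq, ← hpq]
    have h8 := coeff_prod_top L
    rw [hlenL] at h8
    exact h8.symm
  have hlen : L.length = L'.length := by
    rw [hLdef, hL'def, List.length_map, List.length_range, List.length_map, List.length_range]
  have hmem : ∀ Q ∈ L, Qᴴ = Q ∧ Q * Q = Q ∧ Q.rank = 1 := by
    intro Q hQ
    rw [hLdef] at hQ
    obtain ⟨j, hj, rfl⟩ := List.mem_map.mp hQ
    exact hP j (List.mem_range.mp hj)
  have hmem' : ∀ Q ∈ L', Qᴴ = Q ∧ Q * Q = Q ∧ Q.rank = 1 := by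
    intro Q hQ
    rw [hL'def] at hQ
    obtain ⟨j, hj, rfl⟩ := List.mem_map.mp hQ
    exact hP' j (List.mem_range.mp hj)
  have hLL' : L = L' := lists_eq L L' hlen hmem hmem'
    (by rw [hLprod]; exact hAN) (by rw [hpq, hpq'])
  intro j hj
  have h7 := congrArg (fun l : List (Mat m) => l[j]?) hLL'
  simp only [hLdef, hL'def, List.getElem?_map, List.getElem?_range, hj, if_pos,
    Option.map_some] at h7
  simpa using h7
end

section
/- Fix m ≥ 2, N ≥ 1 and ζ_1, …, ζ_{m−1} ∈ P_N^−. Let (u_1, …, u_m) and (v_1, …, v_m) be two (possibly equal) solutions of the system (S). Then the Laurent polynomial Σ_{i=1}^{m−1} u_i(z)ṽ_i(z) + ũ_m(z)v_m(z) is constant, i.e. it takes the same value at every z ∈ ℂ \ {0}. -/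
open Matrix Polynomial BigOperators

/-- Evaluation at `z` of the adjoint `p̃(z) = ∑ conj(c_k) z^{-k}` of a polynomial
`p(z) = ∑ c_k z^k`. -/
noncomputable def adjEval (p : Polynomial ℂ) (z : ℂ) : ℂ :=
  (p.map (starRingEnd ℂ)).eval z⁻¹

/-- A (Laurent-polynomial) function of `z ∈ ℂ \ {0}` belongs to `P⁺`, i.e. it has no
negative-power terms: it agrees with a genuine polynomial away from `0`. -/
def InPPlus (f : ℂ → ℂ) : Prop :=
  ∃ p : Polynomial ℂ, ∀ z : ℂ, z ≠ 0 → f z = p.eval z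

/-- The vector function `u(z) = (x_1(z), …, x_{m-1}(z), x̃_m(z))ᵀ` associated with a tuple
`(x_1, …, x_m)`, `m = n + 1`. -/
noncomputable def vecFun (n : ℕ) (x : Fin (n + 1) → Polynomial ℂ) (z : ℂ) :
    Fin (n + 1) → ℂ :=
  fun j => if j = Fin.last n then adjEval (x j) z else (x j).eval z

/-- `(x_1, …, x_m)`, `m = n + 1`, is a solution of the system (S) determined by
`ζ_1, …, ζ_{m-1} ∈ P_N^-`, where `ζ_i(z) = (ζ i).eval z⁻¹`:
each `x_i ∈ P_N^+`, `ζ_i(z) x_m(z) - x̃_i(z) ∈ P⁺` for `i = 1, …, m-1`, and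
`ζ_1(z) x_1(z) + … + ζ_{m-1}(z) x_{m-1}(z) + x̃_m(z) ∈ P⁺`. -/
def IsSolS (n N : ℕ) (ζ : Fin n → Polynomial ℂ) (x : Fin (n + 1) → Polynomial ℂ) : Prop :=
  (∀ j, (x j).natDegree ≤ N) ∧
  (∀ i : Fin n, InPPlus (fun z =>
    (ζ i).eval z⁻¹ * (x (Fin.last n)).eval z - adjEval (x i.castSucc) z)) ∧
  InPPlus (fun z =>
    (∑ i : Fin n, (ζ i).eval z⁻¹ * (x i.castSucc).eval z) + adjEval (x (Fin.last n)) z)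


private lemma conj_eval (p : Polynomial ℂ) (z : ℂ) :
    (starRingEnd ℂ) (p.eval z) = (p.map (starRingEnd ℂ)).eval ((starRingEnd ℂ) z) := by
  rw [Polynomial.eval_map, Polynomial.eval, Polynomial.hom_eval₂]
  rfl

private lemma map_conj_map_conj (p : Polynomial ℂ) :
    (p.map (starRingEnd ℂ)).map (starRingEnd ℂ) = p := by
  ext k
  simp [Polynomial.coeff_map]

private lemma conjA (p : Polynomial ℂ) (z : ℂ) :
    (starRingEnd ℂ) (p.eval (((starRingEnd ℂ) z)⁻¹)) = adjEval p z := by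
  rw [conj_eval, adjEval]
  simp [map_inv₀]

private lemma conjB (p : Polynomial ℂ) (z : ℂ) :
    (starRingEnd ℂ) (adjEval p (((starRingEnd ℂ) z)⁻¹)) = p.eval z := by
  rw [adjEval, conj_eval, map_conj_map_conj]
  simp [map_inv₀]

private lemma eval_const_of_inv (P R : Polynomial ℂ)
    (h : ∀ z : ℂ, z ≠ 0 → P.eval z = R.eval z⁻¹) :
    ∀ z w : ℂ, z ≠ 0 → w ≠ 0 → P.eval z = P.eval w := by
  set d := R.natDegree with hd
  have hAB : (Polynomial.X ^ d * P : Polynomial ℂ) = Polynomial.reflect d R := by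
    apply Polynomial.eq_of_infinite_eval_eq
    apply Set.Infinite.mono (s := {z : ℂ | z ≠ 0})
    · intro z hz
      have hz : z ≠ 0 := hz
      haveI : Invertible (z⁻¹ : ℂ) := invertibleOfNonzero (inv_ne_zero hz)
      have h0 := Polynomial.eval₂_reflect_mul_pow (RingHom.id ℂ) (z⁻¹) d R le_rfl
      rw [invOf_eq_inv, inv_inv] at h0
      have h1 : (Polynomial.reflect d R).eval z * (z⁻¹) ^ d = R.eval z⁻¹ := h0
      simp only [Set.mem_setOf_eq, Polynomial.eval_mul, Polynomial.eval_pow,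
        Polynomial.eval_X]
      rw [h z hz, ← h1]
      rw [mul_left_comm, ← mul_pow, mul_inv_cancel₀ hz, one_pow, mul_one]
    · apply Set.infinite_of_finite_compl
      have : {z : ℂ | z ≠ 0}ᶜ = {0} := by ext x; simp
      rw [this]; exact Set.finite_singleton 0
  have hcoeff : ∀ k, 1 ≤ k → P.coeff k = 0 := by
    intro k hk
    have h1 : P.coeff k = (Polynomial.X ^ d * P : Polynomial ℂ).coeff (k + d) := by
      rw [Polynomial.coeff_X_pow_mul]
    rw [h1, hAB, Polynomial.coeff_reflect,
      Polynomial.revAt_eq_self_of_lt (by omega)]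
    exact Polynomial.coeff_eq_zero_of_natDegree_lt (by omega)
  have hPC : P = Polynomial.C (P.coeff 0) := by
    ext k
    cases k with
    | zero => simp
    | succ k => simp [hcoeff (k + 1) (by omega), Polynomial.coeff_C]
  intro z w hz hw
  rw [hPC]; simp

theorem stmt_8 {n N : ℕ} (hn : 1 ≤ n) (hN : 1 ≤ N)
    (ζ : Fin n → Polynomial ℂ)
    (hζ : ∀ i, (ζ i).natDegree ≤ N ∧ (ζ i).coeff 0 = 0)
    (u v : Fin (n + 1) → Polynomial ℂ)
    (hu : IsSolS n N ζ u) (hv : IsSolS n N ζ v) :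
    ∀ z w : ℂ, z ≠ 0 → w ≠ 0 →
      ((∑ i : Fin n, (u i.castSucc).eval z * adjEval (v i.castSucc) z) +
          adjEval (u (Fin.last n)) z * (v (Fin.last n)).eval z) =
        ((∑ i : Fin n, (u i.castSucc).eval w * adjEval (v i.castSucc) w) +
          adjEval (u (Fin.last n)) w * (v (Fin.last n)).eval w) := by
  choose p hp using hv.2.1
  obtain ⟨q, hq⟩ := hu.2.2
  choose r hr using hu.2.1
  obtain ⟨s, hs⟩ := hv.2.2
  set P : Polynomial ℂ := v (Fin.last n) * q - ∑ i : Fin n, u i.castSucc * p i with hPdef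
  set Q : Polynomial ℂ := u (Fin.last n) * s - ∑ i : Fin n, v i.castSucc * r i with hQdef
  have hFP : ∀ z : ℂ, z ≠ 0 →
      ((∑ i : Fin n, (u i.castSucc).eval z * adjEval (v i.castSucc) z) +
        adjEval (u (Fin.last n)) z * (v (Fin.last n)).eval z) = P.eval z := by
    intro z hz
    have step : ∀ i ∈ Finset.univ, (u i.castSucc).eval z * adjEval (v i.castSucc) z =
        (v (Fin.last n)).eval z * ((ζ i).eval z⁻¹ * (u i.castSucc).eval z) -
          (u i.castSucc).eval z * (p i).eval z := by
      intro i _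
      have h := hp i z hz
      simp only at h
      linear_combination -((u i.castSucc).eval z * h)
    rw [Finset.sum_congr rfl step, Finset.sum_sub_distrib, ← Finset.mul_sum, hPdef]
    simp only [Polynomial.eval_sub, Polynomial.eval_mul, Polynomial.eval_finset_sum]
    rw [← hq z hz]
    ring
  have hGQ : ∀ z : ℂ, z ≠ 0 →
      ((∑ i : Fin n, adjEval (u i.castSucc) z * (v i.castSucc).eval z) +
        (u (Fin.last n)).eval z * adjEval (v (Fin.last n)) z) = Q.eval z := by
    intro z hz
    have step : ∀ i ∈ Finset.univ, adjEval (u i.castSucc) z * (v i.castSucc).eval z =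
        (u (Fin.last n)).eval z * ((ζ i).eval z⁻¹ * (v i.castSucc).eval z) -
          (v i.castSucc).eval z * (r i).eval z := by
      intro i _
      have h := hr i z hz
      simp only at h
      linear_combination -((v i.castSucc).eval z * h)
    rw [Finset.sum_congr rfl step, Finset.sum_sub_distrib, ← Finset.mul_sum, hQdef]
    simp only [Polynomial.eval_sub, Polynomial.eval_mul, Polynomial.eval_finset_sum]
    rw [← hs z hz]
    ring
  have hPR : ∀ z : ℂ, z ≠ 0 → P.eval z = (Q.map (starRingEnd ℂ)).eval z⁻¹ := by
    intro z hz
    have hw0 : ((starRingEnd ℂ) z)⁻¹ ≠ 0 := inv_ne_zero (by simpa using hz)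
    have h1 : (Q.map (starRingEnd ℂ)).eval z⁻¹ =
        (starRingEnd ℂ) (Q.eval (((starRingEnd ℂ) z)⁻¹)) := by
      rw [conj_eval]
      simp [map_inv₀]
    rw [h1, ← hGQ _ hw0, ← hFP z hz]
    simp only [map_add, map_sum, _root_.map_mul, conjA, conjB]
  intro z w hz hw
  rw [hFP z hz, hFP w hw]
  exact eval_const_of_inv P (Q.map (starRingEnd ℂ)) hPR z w hz hw
end

section
/- Fix m ≥ 2, N ≥ 1 and ζ_1, …, ζ_{m−1} ∈ P_N^−. Let (u_1, …, u_m) and (v_1, …, v_m) be two solutions of the system (S) whose associated vector functions u(z) and v(z) satisfy u(1) = v(1) in ℂ^m. Then u(z) = v(z) for every z ∈ ℂ \ {0}; in particular, if u(1) = 0 then u(z) = 0 for all z ∈ ℂ \ {0}. -/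
open Matrix Polynomial BigOperators

namespace Stmt9Aux

lemma eval_map_conj (p : Polynomial ℂ) (w : ℂ) :
    (p.map (starRingEnd ℂ)).eval ((starRingEnd ℂ) w) = (starRingEnd ℂ) (p.eval w) := by
  rw [Polynomial.eval_map, Polynomial.eval₂_at_apply]

lemma circle_infinite : ({z : ℂ | ‖z‖ = 1}).Infinite := by
  have h01 : (Set.Ioo (0:ℝ) 1).Infinite := Set.Ioo_infinite (by norm_num)
  have hinj : Set.InjOn (fun θ : ℝ => Complex.exp (θ * Complex.I)) (Set.Ioo 0 1) := by
    intro a ha b hb hab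
    simp only [Complex.exp_eq_exp_iff_exists_int] at hab
    obtain ⟨k, hk⟩ := hab
    have hI : (a : ℂ) = b + k * (2 * Real.pi) := by
      have h2 : ((a : ℂ) - b - k * (2 * Real.pi)) * Complex.I = 0 := by
        ring_nf; ring_nf at hk; linear_combination hk
      rcases mul_eq_zero.1 h2 with h | h
      · linear_combination h
      · exact absurd h Complex.I_ne_zero
    have hR : (a : ℝ) = b + k * (2 * Real.pi) := by exact_mod_cast hI
    have hpi := Real.pi_gt_three
    have hk0 : k = 0 := by
      rcases lt_trichotomy k 0 with h | h | h
      · have : (k : ℝ) ≤ -1 := by exact_mod_cast (by omega : k ≤ -1)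
        nlinarith [ha.1, ha.2, hb.1, hb.2]
      · exact h
      · have : (1 : ℝ) ≤ k := by exact_mod_cast h
        nlinarith [ha.1, ha.2, hb.1, hb.2]
    rw [hk0] at hR; push_cast at hR; linarith
  refine (h01.image hinj).mono ?_
  rintro z ⟨θ, hθ, rfl⟩
  simpa using Complex.norm_exp_ofReal_mul_I θ

/-- Key lemma: a solution of (S) whose vector function vanishes at 1 is identically zero. -/
lemma main_zero {n N : ℕ} (ζ : Fin n → Polynomial ℂ) (x : Fin (n + 1) → Polynomial ℂ)
    (hx : IsSolS n N ζ x) (h1 : vecFun n x 1 = 0) : ∀ j, x j = 0 := by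
  obtain ⟨hdeg, hrel, hsum⟩ := hx
  unfold InPPlus at hrel hsum
  choose f hf using hrel
  obtain ⟨g, hg⟩ := hsum
  -- The quantity Q(z) = ∑ x_j(z) x̃_j(z)
  set Q : ℂ → ℂ := fun z => ∑ j : Fin (n+1), (x j).eval z * adjEval (x j) z with hQdef
  set p : Polynomial ℂ :=
    x (Fin.last n) * g - ∑ i : Fin n, f i * x i.castSucc with hpdef
  have hQ : ∀ z : ℂ, z ≠ 0 → Q z = p.eval z := by
    intro z hz
    have hgz := hg z hz
    have hpe : p.eval z = (x (Fin.last n)).eval z * g.eval z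
        - ∑ i : Fin n, (f i).eval z * (x i.castSucc).eval z := by
      simp [hpdef, eval_finset_sum]
    rw [hpe, ← hgz]
    have hfe : ∀ i : Fin n, (f i).eval z =
        (ζ i).eval z⁻¹ * (x (Fin.last n)).eval z - adjEval (x i.castSucc) z :=
      fun i => (hf i z hz).symm
    simp only [hfe]
    rw [hQdef]
    simp only [Fin.sum_univ_castSucc]
    rw [mul_add, Finset.mul_sum]
    have hterm : ∀ i : Fin n, ((ζ i).eval z⁻¹ * (x (Fin.last n)).eval z
        - adjEval (x i.castSucc) z) * (x i.castSucc).eval z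
        = (x (Fin.last n)).eval z * ((ζ i).eval z⁻¹ * (x i.castSucc).eval z)
          - (x i.castSucc).eval z * adjEval (x i.castSucc) z := fun i => by ring
    rw [Finset.sum_congr rfl (fun i _ => hterm i), Finset.sum_sub_distrib]
    ring
  -- self-adjointness of Q
  have hQsym : ∀ z : ℂ, z ≠ 0 → Q z = (starRingEnd ℂ) (Q ((starRingEnd ℂ) z)⁻¹) := by
    intro z hz
    have hcz : (starRingEnd ℂ) z ≠ 0 := by simpa using hz
    set w : ℂ := ((starRingEnd ℂ) z)⁻¹ with hwdef
    have hconjw : (starRingEnd ℂ) w = z⁻¹ := by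
      rw [hwdef, map_inv₀, Complex.conj_conj]
    have hconjwinv : (starRingEnd ℂ) w⁻¹ = z := by
      rw [hwdef, inv_inv, Complex.conj_conj]
    rw [hQdef]
    simp only [map_sum, _root_.map_mul]
    refine (Finset.sum_congr rfl fun j _ => ?_).symm
    have e1 : (starRingEnd ℂ) ((x j).eval w) = adjEval (x j) z := by
      rw [adjEval, ← hconjw, eval_map_conj]
    have e2 : (starRingEnd ℂ) (adjEval (x j) w) = (x j).eval z := by
      have hw2 : w⁻¹ = (starRingEnd ℂ) ((starRingEnd ℂ) w⁻¹) := (Complex.conj_conj _).symm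
      rw [adjEval, hw2, eval_map_conj, Complex.conj_conj, hconjwinv]
    rw [e1, e2, mul_comm]
  -- hence p(z) = p̃(z) for z ≠ 0
  have hpadj : ∀ z : ℂ, z ≠ 0 → p.eval z = (p.map (starRingEnd ℂ)).eval z⁻¹ := by
    intro z hz
    have hcz : ((starRingEnd ℂ) z)⁻¹ ≠ 0 := by simpa using hz
    have := hQsym z hz
    rw [hQ z hz, hQ _ hcz] at this
    rw [this, ← eval_map_conj, map_inv₀, Complex.conj_conj]
  -- p is constant
  have hM : p.natDegree = 0 := by
    by_contra hM0
    have hpne : p ≠ 0 := fun h => hM0 (by simp [h])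
    set M := p.natDegree with hMdef
    set q := p.map (starRingEnd ℂ) with hqdef
    have hqdeg : q.natDegree = M := Polynomial.natDegree_map (starRingEnd ℂ)
    have heq : p * Polynomial.X ^ M = Polynomial.reflect M q := by
      apply Polynomial.eq_of_infinite_eval_eq
      apply Set.Infinite.mono (s := {(0:ℂ)}ᶜ)
      · intro z hz
        have hz : z ≠ 0 := hz
        have hzi : z⁻¹ ≠ 0 := inv_ne_zero hz
        haveI : Invertible z⁻¹ := invertibleOfNonzero hzi
        have hrefl := Polynomial.eval₂_reflect_mul_pow (RingHom.id ℂ) z⁻¹ M q hqdeg.le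
        rw [invOf_eq_inv, inv_inv] at hrefl
        have hrefl' : (Polynomial.reflect M q).eval z * (z⁻¹) ^ M = q.eval z⁻¹ := hrefl
        have hzM : (z⁻¹) ^ M * z ^ M = 1 := by
          rw [← mul_pow, inv_mul_cancel₀ hz, one_pow]
        simp only [Set.mem_setOf_eq, Polynomial.eval_mul, Polynomial.eval_pow,
          Polynomial.eval_X]
        rw [hpadj z hz, ← hrefl', mul_assoc, hzM, mul_one]
      · exact (Set.finite_singleton (0:ℂ)).infinite_compl
    have hdegL : (p * Polynomial.X ^ M).natDegree = M + M := by
      rw [Polynomial.natDegree_mul hpne (pow_ne_zero _ Polynomial.X_ne_zero),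
        Polynomial.natDegree_X_pow]
    have hdegR : (Polynomial.reflect M q).natDegree ≤ M := by
      apply Polynomial.natDegree_le_iff_coeff_eq_zero.2
      intro i hi
      rw [Polynomial.coeff_reflect, Polynomial.revAt_eq_self_of_lt hi]
      exact Polynomial.coeff_eq_zero_of_natDegree_lt (hqdeg ▸ hi)
    rw [heq] at hdegL
    omega
  -- value of p at 1 is 0
  have hx1 : ∀ j, (x j).eval 1 = 0 := by
    intro j
    have := congrFun h1 j
    rw [vecFun] at this
    by_cases hj : j = Fin.last n
    · rw [if_pos hj] at this
      have h0 : adjEval (x j) 1 = 0 := by simpa using this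
      rw [adjEval, inv_one, ← RingHom.map_one (starRingEnd ℂ), eval_map_conj] at h0
      simpa using h0
    · rw [if_neg hj] at this; simpa using this
  have hp1 : p.eval 1 = 0 := by
    rw [← hQ 1 one_ne_zero, hQdef]
    apply Finset.sum_eq_zero
    intro j _
    rw [hx1 j, zero_mul]
  have hp0 : p = 0 := by
    obtain ⟨c, hc⟩ := Polynomial.natDegree_eq_zero.1 hM
    have hc0 : c = 0 := by rw [← hc] at hp1; simpa using hp1
    rw [← hc, hc0, Polynomial.C_0]
  -- Q vanishes off 0, hence each x_j vanishes on the unit circle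
  have hcirc : ∀ z : ℂ, ‖z‖ = 1 → ∀ j, (x j).eval z = 0 := by
    intro z hz1 j
    have hz : z ≠ 0 := by
      intro h; rw [h] at hz1; simp at hz1
    have hQz : Q z = 0 := by rw [hQ z hz, hp0]; simp
    have hzinv : z⁻¹ = (starRingEnd ℂ) z := by
      have h2 : Complex.normSq z = 1 := by
        rw [← Complex.sq_norm, hz1]; norm_num
      have h3 : z * (starRingEnd ℂ) z = 1 := by
        rw [Complex.mul_conj, h2]; norm_num
      exact inv_eq_of_mul_eq_one_right h3
    have hadj : ∀ k : Fin (n+1), adjEval (x k) z = (starRingEnd ℂ) ((x k).eval z) := by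
      intro k
      rw [adjEval, hzinv, eval_map_conj]
    have hsumr : (∑ j : Fin (n+1), Complex.normSq ((x j).eval z)) = 0 := by
      have : Q z = ((∑ j : Fin (n+1), Complex.normSq ((x j).eval z) : ℝ) : ℂ) := by
        rw [hQdef]
        push_cast
        refine Finset.sum_congr rfl fun k _ => ?_
        rw [hadj k, Complex.mul_conj]
      rw [hQz] at this
      exact_mod_cast this.symm
    have := (Finset.sum_eq_zero_iff_of_nonneg
      (fun k _ => Complex.normSq_nonneg ((x k).eval z))).1 hsumr j (Finset.mem_univ j)
    exact Complex.normSq_eq_zero.1 this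
  intro j
  apply Polynomial.eq_zero_of_infinite_isRoot
  apply circle_infinite.mono
  intro z hz
  exact hcirc z hz j
  
/-- difference of solutions is a solution -/
lemma isSolS_sub {n N : ℕ} (ζ : Fin n → Polynomial ℂ) (u v : Fin (n + 1) → Polynomial ℂ)
    (hu : IsSolS n N ζ u) (hv : IsSolS n N ζ v) :
    IsSolS n N ζ (fun j => u j - v j) := by
  obtain ⟨hud, hur, hus⟩ := hu
  obtain ⟨hvd, hvr, hvs⟩ := hv
  refine ⟨fun j => le_trans (Polynomial.natDegree_sub_le _ _) (max_le (hud j) (hvd j)),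
    fun i => ?_, ?_⟩
  · obtain ⟨p, hp⟩ := hur i
    obtain ⟨q, hq⟩ := hvr i
    refine ⟨p - q, fun z hz => ?_⟩
    have h1 := hp z hz
    have h2 := hq z hz
    simp only [adjEval, Polynomial.map_sub, Polynomial.eval_sub] at *
    linear_combination h1 - h2
  · obtain ⟨p, hp⟩ := hus
    obtain ⟨q, hq⟩ := hvs
    refine ⟨p - q, fun z hz => ?_⟩
    have h1 := hp z hz
    have h2 := hq z hz
    simp only [adjEval, Polynomial.map_sub, Polynomial.eval_sub, mul_sub,
      Finset.sum_sub_distrib] at *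
    linear_combination h1 - h2

lemma vecFun_sub {n : ℕ} (u v : Fin (n + 1) → Polynomial ℂ) (z : ℂ) :
    vecFun n (fun j => u j - v j) z = vecFun n u z - vecFun n v z := by
  funext j
  simp only [vecFun, Pi.sub_apply, adjEval, Polynomial.map_sub, Polynomial.eval_sub]
  split <;> simp

end Stmt9Aux

theorem stmt_9 {n N : ℕ} (hn : 1 ≤ n) (hN : 1 ≤ N)
    (ζ : Fin n → Polynomial ℂ)
    (hζ : ∀ i, (ζ i).natDegree ≤ N ∧ (ζ i).coeff 0 = 0)
    (u v : Fin (n + 1) → Polynomial ℂ)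
    (hu : IsSolS n N ζ u) (hv : IsSolS n N ζ v) :
    (vecFun n u 1 = vecFun n v 1 → ∀ z : ℂ, z ≠ 0 → vecFun n u z = vecFun n v z) ∧
    (vecFun n u 1 = 0 → ∀ z : ℂ, z ≠ 0 → vecFun n u z = 0) := by
  have vecFun_zero : ∀ (x : Fin (n+1) → Polynomial ℂ), (∀ j, x j = 0) →
      ∀ z : ℂ, vecFun n x z = 0 := by
    intro x hx z
    funext j
    simp [vecFun, hx j, adjEval]
  constructor
  · intro h1 z hz
    have hw := Stmt9Aux.isSolS_sub ζ u v hu hv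
    have hw1 : vecFun n (fun j => u j - v j) 1 = 0 := by
      rw [Stmt9Aux.vecFun_sub, h1, sub_self]
    have := Stmt9Aux.main_zero ζ _ hw hw1
    have h0 := vecFun_zero _ this z
    rw [Stmt9Aux.vecFun_sub] at h0
    exact sub_eq_zero.1 h0
  · intro h1 z hz
    exact vecFun_zero u (Stmt9Aux.main_zero ζ u hu h1) z
end

section
/- Let m ≥ 2, N ≥ 1, and let U(z) ∈ PU_1(m,N). Then there exists a unique tuple (ζ_1, …, ζ_{m−1}) ∈ (P_N^−)^{m−1} such that, with F(z) the associated m×m Laurent polynomial matrix, every entry of F(z)U(z) lies in P^+. -/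
open Matrix Polynomial BigOperators

/-- Evaluation at `z` of the `m × m` (`m = n + 1`) matrix function `U(z)` whose first `m - 1`
rows have the polynomial entries `u i j` and whose last row has the entries `ũ_{mj}(z)`. -/
noncomputable def Ueval (n : ℕ) (u : Fin (n + 1) → Fin (n + 1) → Polynomial ℂ) (z : ℂ) :
    Matrix (Fin (n + 1)) (Fin (n + 1)) ℂ :=
  Matrix.of fun i j => if i = Fin.last n then adjEval (u i j) z else (u i j).eval z

/-- Evaluation at `z` of the adjoint `Ũ(z)` of the matrix function `U(z)` above. -/
noncomputable def UadjEval (n : ℕ) (u : Fin (n + 1) → Fin (n + 1) → Polynomial ℂ) (z : ℂ) :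
    Matrix (Fin (n + 1)) (Fin (n + 1)) ℂ :=
  Matrix.of fun i j => if j = Fin.last n then (u j i).eval z else adjEval (u j i) z

/-- `U(z)` (encoded by the polynomials `u i j ∈ P_N^+`) belongs to the class `PU_1(m, N)`,
`m = n + 1`: the first `m - 1` rows of `U(z)` are `(u i j)(z)`, the last row is `ũ_{mj}(z)`,
`Ũ(z)U(z) = I`, `det U(z) = 1`, `U(1) = I`, and `u_{mj}(0) ≠ 0` for at least one `j`. -/
def IsPU1 (n N : ℕ) (u : Fin (n + 1) → Fin (n + 1) → Polynomial ℂ) : Prop :=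
  (∀ i j, (u i j).natDegree ≤ N) ∧
  (∀ z : ℂ, z ≠ 0 → UadjEval n u z * Ueval n u z = 1) ∧
  (∀ z : ℂ, z ≠ 0 → (Ueval n u z).det = 1) ∧
  Ueval n u 1 = 1 ∧
  ∃ j, (u (Fin.last n) j).coeff 0 ≠ 0

/-- Evaluation at `z` of the `m × m` (`m = n + 1`) matrix `F(z)` which is the identity matrix
except that its last row is `(ζ_1(z), …, ζ_{m-1}(z), 1)`, where `ζ_i(z) = (ζ i).eval z⁻¹`. -/
noncomputable def Feval (n : ℕ) (ζ : Fin n → Polynomial ℂ) (z : ℂ) :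
    Matrix (Fin (n + 1)) (Fin (n + 1)) ℂ :=
  Matrix.of fun i j =>
    Fin.lastCases
      (Fin.lastCases (1 : ℂ) (fun j' => (ζ j').eval z⁻¹) j)
      (fun i' => if i'.castSucc = j then (1 : ℂ) else 0) i


set_option linter.unusedVariables false

section InPPlusLemmas

lemma inPPlus_congr {f g : ℂ → ℂ} (h : InPPlus f) (e : ∀ z : ℂ, z ≠ 0 → g z = f z) :
    InPPlus g := by
  obtain ⟨p, hp⟩ := h
  exact ⟨p, fun z hz => (e z hz).trans (hp z hz)⟩

lemma inPPlus_const (c : ℂ) : InPPlus (fun _ => c) := ⟨Polynomial.C c, by simp⟩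

lemma InPPlus.add {f g : ℂ → ℂ} (hf : InPPlus f) (hg : InPPlus g) :
    InPPlus (fun z => f z + g z) := by
  obtain ⟨p, hp⟩ := hf; obtain ⟨q, hq⟩ := hg
  exact ⟨p + q, fun z hz => by simp [hp z hz, hq z hz]⟩

lemma InPPlus.mul {f g : ℂ → ℂ} (hf : InPPlus f) (hg : InPPlus g) :
    InPPlus (fun z => f z * g z) := by
  obtain ⟨p, hp⟩ := hf; obtain ⟨q, hq⟩ := hg
  exact ⟨p * q, fun z hz => by simp [hp z hz, hq z hz]⟩

lemma inPPlus_sum {ι : Type*} (s : Finset ι) (f : ι → ℂ → ℂ)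
    (h : ∀ i ∈ s, InPPlus (f i)) : InPPlus (fun z => ∑ i ∈ s, f i z) := by
  classical
  induction s using Finset.induction_on with
  | empty => simpa using inPPlus_const 0
  | insert _ _ hx ih =>
    rename_i a s
    simp only [Finset.sum_insert hx]
    exact (h a (Finset.mem_insert_self a s)).add (ih fun i hi => h i (Finset.mem_insert_of_mem hi))

lemma inPPlus_prod {ι : Type*} (s : Finset ι) (f : ι → ℂ → ℂ)
    (h : ∀ i ∈ s, InPPlus (f i)) : InPPlus (fun z => ∏ i ∈ s, f i z) := by
  classical
  induction s using Finset.induction_on with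
  | empty => simpa using inPPlus_const 1
  | insert _ _ hx ih =>
    rename_i a s
    simp only [Finset.prod_insert hx]
    exact (h a (Finset.mem_insert_self a s)).mul (ih fun i hi => h i (Finset.mem_insert_of_mem hi))

end InPPlusLemmas

lemma poly_funext_nz {P Q : Polynomial ℂ} (h : ∀ z : ℂ, z ≠ 0 → P.eval z = Q.eval z) :
    P = Q := by
  apply Polynomial.eq_of_infinite_eval_eq
  have h0 : ({(0 : ℂ)}ᶜ : Set ℂ).Infinite := (Set.finite_singleton 0).infinite_compl
  apply h0.mono
  intro z hz
  exact h z hz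

lemma natDegree_reflect_le {p : Polynomial ℂ} {M : ℕ} (hp : p.natDegree ≤ M) :
    (p.reflect M).natDegree ≤ M := by
  rw [Polynomial.natDegree_le_iff_coeff_eq_zero] at *
  intro k hk
  rw [Polynomial.coeff_reflect, Polynomial.revAt_eq_self_of_lt hk]
  exact hp k hk

lemma reflect_eval {p : Polynomial ℂ} {M : ℕ} (hp : p.natDegree ≤ M) {z : ℂ} (hz : z ≠ 0) :
    (p.reflect M).eval z = z ^ M * p.eval z⁻¹ := by
  rw [Polynomial.eval_eq_sum_range' (lt_of_le_of_lt (natDegree_reflect_le hp) (Nat.lt_succ_self M)),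
      Polynomial.eval_eq_sum_range' (lt_of_le_of_lt hp (Nat.lt_succ_self M)), Finset.mul_sum,
      ← Finset.sum_range_reflect]
  apply Finset.sum_congr rfl
  intro j hj
  rw [Finset.mem_range] at hj
  have hj' : j ≤ M := by omega
  have h1 : M + 1 - 1 - j = M - j := by omega
  rw [h1, Polynomial.coeff_reflect, Polynomial.revAt_le (by omega : M - j ≤ M)]
  have h2 : M - (M - j) = j := by omega
  rw [h2]
  have h3 : z ^ (M - j) * z ^ j = z ^ M := by rw [← pow_add]; congr 1; omega
  calc p.coeff j * z ^ (M - j)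
      = p.coeff j * (z ^ (M - j) * z ^ j * (z ^ j)⁻¹) := by
        rw [mul_inv_cancel_right₀ (pow_ne_zero _ hz)]
    _ = z ^ M * (p.coeff j * (z⁻¹) ^ j) := by rw [h3, inv_pow]; ring

lemma reflect_reflect' (p : Polynomial ℂ) (M : ℕ) : (p.reflect M).reflect M = p := by
  ext k
  rw [Polynomial.coeff_reflect, Polynomial.coeff_reflect, Polynomial.revAt_invol]

/-- polynomial avatar of `z^N * adjEval p z`. -/
noncomputable def Rp (N : ℕ) (p : Polynomial ℂ) : Polynomial ℂ :=
  (p.map (starRingEnd ℂ)).reflect N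

lemma Rp_eval {N : ℕ} {p : Polynomial ℂ} (hp : p.natDegree ≤ N) {z : ℂ} (hz : z ≠ 0) :
    (Rp N p).eval z = z ^ N * adjEval p z :=
  reflect_eval (le_trans (Polynomial.natDegree_map_le) hp) hz

lemma Rp_coeff_le {N k : ℕ} (p : Polynomial ℂ) (h : k ≤ N) :
    (Rp N p).coeff k = (starRingEnd ℂ) (p.coeff (N - k)) := by
  rw [Rp, Polynomial.coeff_reflect, Polynomial.revAt_le h, Polynomial.coeff_map]

lemma Rp_coeff_gt {N k : ℕ} {p : Polynomial ℂ} (hp : p.natDegree ≤ N) (h : N < k) :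
    (Rp N p).coeff k = 0 := by
  rw [Rp, Polynomial.coeff_reflect, Polynomial.revAt_eq_self_of_lt h, Polynomial.coeff_map]
  rw [Polynomial.coeff_eq_zero_of_natDegree_lt (lt_of_le_of_lt hp h), map_zero]

lemma natDegree_Rp_le {N : ℕ} {p : Polynomial ℂ} (hp : p.natDegree ≤ N) :
    (Rp N p).natDegree ≤ N :=
  natDegree_reflect_le (le_trans Polynomial.natDegree_map_le hp)

/-- `mkPoly N γ = ∑_{a<N} γ a X^a`. -/
noncomputable def mkPoly (N : ℕ) (γ : ℕ → ℂ) : Polynomial ℂ :=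
  ∑ a ∈ Finset.range N, Polynomial.monomial a (γ a)

lemma mkPoly_coeff (N : ℕ) (γ : ℕ → ℂ) (a : ℕ) :
    (mkPoly N γ).coeff a = if a < N then γ a else 0 := by
  rw [mkPoly, Polynomial.finset_sum_coeff]
  simp only [Polynomial.coeff_monomial]
  rw [Finset.sum_ite_eq' (Finset.range N) a γ]
  simp

lemma natDegree_mkPoly_le (N : ℕ) (γ : ℕ → ℂ) : (mkPoly N γ).natDegree ≤ N - 1 := by
  apply Polynomial.natDegree_sum_le_of_forall_le
  intro a ha
  rw [Finset.mem_range] at ha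
  exact le_trans (Polynomial.natDegree_monomial_le _) (by omega)

lemma mkPoly_mul_coeff (N : ℕ) (γ : ℕ → ℂ) (P : Polynomial ℂ) (m : ℕ) (hm : N ≤ m + 1) :
    (mkPoly N γ * P).coeff m = ∑ a ∈ Finset.range N, γ a * P.coeff (m - a) := by
  rw [mkPoly, Finset.sum_mul, Polynomial.finset_sum_coeff]
  apply Finset.sum_congr rfl
  intro a ha
  rw [Finset.mem_range] at ha
  rw [← Polynomial.C_mul_X_pow_eq_monomial, mul_assoc, Polynomial.coeff_C_mul,
    Polynomial.coeff_X_pow_mul', if_pos (by omega : a ≤ m)]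

open Finset

section MatrixLemmas

variable {n : ℕ}

lemma Feval_castSucc_apply (ζ : Fin n → Polynomial ℂ) (z : ℂ) (i : Fin n) (j : Fin (n+1)) :
    Feval n ζ z i.castSucc j = if i.castSucc = j then 1 else 0 := by
  simp [Feval]

lemma Feval_last_castSucc (ζ : Fin n → Polynomial ℂ) (z : ℂ) (j : Fin n) :
    Feval n ζ z (Fin.last n) j.castSucc = (ζ j).eval z⁻¹ := by
  simp [Feval]

lemma Feval_last_last (ζ : Fin n → Polynomial ℂ) (z : ℂ) :
    Feval n ζ z (Fin.last n) (Fin.last n) = 1 := by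
  simp [Feval]

lemma mul_Feval_castSucc (ζ : Fin n → Polynomial ℂ) (z : ℂ)
    (M : Matrix (Fin (n+1)) (Fin (n+1)) ℂ) (i : Fin n) (j : Fin (n+1)) :
    (Feval n ζ z * M) i.castSucc j = M i.castSucc j := by
  rw [Matrix.mul_apply]
  rw [Finset.sum_eq_single i.castSucc]
  · rw [Feval_castSucc_apply, if_pos rfl, one_mul]
  · intro k _ hk
    rw [Feval_castSucc_apply, if_neg (Ne.symm hk), zero_mul]
  · intro h; exact absurd (Finset.mem_univ _) h

lemma mul_Feval_last (ζ : Fin n → Polynomial ℂ) (z : ℂ)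
    (M : Matrix (Fin (n+1)) (Fin (n+1)) ℂ) (j : Fin (n+1)) :
    (Feval n ζ z * M) (Fin.last n) j
      = (∑ k : Fin n, (ζ k).eval z⁻¹ * M k.castSucc j) + M (Fin.last n) j := by
  rw [Matrix.mul_apply, Fin.sum_univ_castSucc]
  simp [Feval_last_castSucc, Feval_last_last]

lemma det_Feval (ζ : Fin n → Polynomial ℂ) (z : ℂ) : (Feval n ζ z).det = 1 := by
  have htri : (Feval n ζ z).BlockTriangular OrderDual.toDual := by
    intro i j hij
    have hij' : i < j := by simpa using hij
    induction i using Fin.lastCases with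
    | last => exact absurd hij' (not_lt.mpr (Fin.le_last j))
    | cast i =>
      rw [Feval_castSucc_apply, if_neg]
      intro h
      rw [h] at hij'
      exact lt_irrefl _ hij'
  rw [Matrix.det_of_lowerTriangular _ htri]
  rw [Finset.prod_eq_one]
  intro i _
  induction i using Fin.lastCases with
  | last => exact Feval_last_last ζ z
  | cast i => rw [Feval_castSucc_apply, if_pos rfl]

end MatrixLemmas
section MatrixLemmas2

variable {n : ℕ}

lemma Ueval_castSucc (u : Fin (n+1) → Fin (n+1) → Polynomial ℂ) (z : ℂ) (i : Fin n)
    (j : Fin (n+1)) : Ueval n u z i.castSucc j = (u i.castSucc j).eval z := by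
  simp [Ueval, (Fin.castSucc_lt_last i).ne]

lemma Ueval_last (u : Fin (n+1) → Fin (n+1) → Polynomial ℂ) (z : ℂ) (j : Fin (n+1)) :
    Ueval n u z (Fin.last n) j = adjEval (u (Fin.last n) j) z := by
  simp [Ueval]

lemma Feval_mul_Feval (ζ ζ' : Fin n → Polynomial ℂ) (z : ℂ) :
    Feval n (fun i => ζ i - ζ' i) z * Feval n ζ' z = Feval n ζ z := by
  ext i j
  induction i using Fin.lastCases with
  | last =>
    rw [mul_Feval_last]
    induction j using Fin.lastCases with
    | last =>
      rw [Feval_last_last, Feval_last_last]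
      rw [Finset.sum_eq_zero, zero_add]
      intro k _
      rw [Feval_castSucc_apply, if_neg (Fin.castSucc_lt_last k).ne, mul_zero]
    | cast j =>
      rw [Feval_last_castSucc, Feval_last_castSucc]
      rw [Finset.sum_eq_single j]
      · rw [Feval_castSucc_apply, if_pos rfl, mul_one]
        simp
      · intro k _ hk
        rw [Feval_castSucc_apply, if_neg (by simpa using hk), mul_zero]
      · intro h; exact absurd (Finset.mem_univ _) h
  | cast i =>
    rw [mul_Feval_castSucc, Feval_castSucc_apply, Feval_castSucc_apply]

lemma inPPlus_det {m : ℕ} {M : ℂ → Matrix (Fin m) (Fin m) ℂ}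
    (h : ∀ i j, InPPlus fun z => M z i j) : InPPlus fun z => (M z).det := by
  simp only [Matrix.det_apply']
  exact inPPlus_sum _ _ fun σ _ => (inPPlus_const _).mul (inPPlus_prod _ _ fun i _ => h _ _)

lemma inPPlus_adjugate {m : ℕ} {M : ℂ → Matrix (Fin m) (Fin m) ℂ}
    (h : ∀ i j, InPPlus fun z => M z i j) (i j : Fin m) :
    InPPlus fun z => (M z).adjugate i j := by
  simp only [Matrix.adjugate_apply]
  apply inPPlus_det
  intro p q
  simp only [Matrix.updateRow_apply]
  by_cases hp : p = j
  · simp only [hp, if_pos rfl]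
    exact inPPlus_const _
  · simp only [if_neg hp]
    exact h p q

end MatrixLemmas2
section Uniqueness

variable {n N : ℕ}

lemma eq_zero_of_inPPlus_inv {p : Polynomial ℂ} {N : ℕ} (hd : p.natDegree ≤ N)
    (h0 : p.coeff 0 = 0) (h : InPPlus fun z => p.eval z⁻¹) : p = 0 := by
  obtain ⟨q, hq⟩ := h
  have key : p.reflect N = Polynomial.X ^ N * q := by
    apply poly_funext_nz
    intro z hz
    rw [reflect_eval hd hz]
    have := hq z hz
    simp only at this
    rw [this]
    simp
  ext k
  rcases Nat.eq_zero_or_pos k with hk | hk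
  · simpa [hk] using h0
  by_cases hkN : k ≤ N
  · have : p.coeff k = (p.reflect N).coeff (N - k) := by
      rw [Polynomial.coeff_reflect, Polynomial.revAt_le (by omega : N - k ≤ N)]
      congr 1; omega
    rw [this, key, Polynomial.coeff_X_pow_mul', if_neg (by omega)]
    simp
  · rw [Polynomial.coeff_eq_zero_of_natDegree_lt (lt_of_le_of_lt hd (by omega))]
    simp

lemma unique_sol (u : Fin (n+1) → Fin (n+1) → Polynomial ℂ)
    (hdet : ∀ z : ℂ, z ≠ 0 → (Ueval n u z).det = 1)
    (ζ ζ' : Fin n → Polynomial ℂ)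
    (hζ : ∀ i, (ζ i).natDegree ≤ N ∧ (ζ i).coeff 0 = 0)
    (hζ' : ∀ i, (ζ' i).natDegree ≤ N ∧ (ζ' i).coeff 0 = 0)
    (h1 : ∀ i j, InPPlus fun z => (Feval n ζ z * Ueval n u z) i j)
    (h2 : ∀ i j, InPPlus fun z => (Feval n ζ' z * Ueval n u z) i j) :
    ζ = ζ' := by
  funext i
  have hM : ∀ z : ℂ, z ≠ 0 →
      (Feval n ζ z * Ueval n u z) * (Feval n ζ' z * Ueval n u z).adjugate
        = Feval n (fun i => ζ i - ζ' i) z := by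
    intro z hz
    have hA : (Feval n ζ' z * Ueval n u z) * (Feval n ζ' z * Ueval n u z).adjugate = 1 := by
      rw [Matrix.mul_adjugate, Matrix.det_mul, det_Feval, hdet z hz, one_mul, one_smul]
    rw [← Feval_mul_Feval ζ ζ' z, Matrix.mul_assoc, Matrix.mul_assoc, ← Matrix.mul_assoc
      (Feval n ζ' z), hA, Matrix.mul_one]
  have key : InPPlus fun z => (ζ i - ζ' i).eval z⁻¹ := by
    have hent : InPPlus fun z =>
        ((Feval n ζ z * Ueval n u z) * (Feval n ζ' z * Ueval n u z).adjugate)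
          (Fin.last n) i.castSucc := by
      simp only [Matrix.mul_apply]
      exact inPPlus_sum _ _ fun k _ => (h1 _ _).mul (inPPlus_adjugate h2 _ _)
    apply inPPlus_congr hent
    intro z hz
    rw [hM z hz, Feval_last_castSucc]
  have hzero : ζ i - ζ' i = 0 := by
    apply eq_zero_of_inPPlus_inv (N := N) _ _ key
    · exact le_trans (Polynomial.natDegree_sub_le _ _) (max_le (hζ i).1 (hζ' i).1)
    · rw [Polynomial.coeff_sub, (hζ i).2, (hζ' i).2, sub_zero]
  exact sub_eq_zero.mp hzero

end Uniqueness
section I3sec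

variable {n N : ℕ}

lemma I3 (u : Fin (n+1) → Fin (n+1) → Polynomial ℂ)
    (hdeg : ∀ i j, (u i j).natDegree ≤ N)
    (hUU : ∀ z : ℂ, z ≠ 0 → UadjEval n u z * Ueval n u z = 1) (p q : Fin (n+1)) :
    ∑ i : Fin n, Rp N (u i.castSucc p) * u i.castSucc q
      + u (Fin.last n) p * Rp N (u (Fin.last n) q)
      = if p = q then (Polynomial.X : Polynomial ℂ) ^ N else 0 := by
  apply poly_funext_nz
  intro z hz
  have h1 : (UadjEval n u z * Ueval n u z) p q = (1 : Matrix (Fin (n+1)) (Fin (n+1)) ℂ) p q := by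
    rw [hUU z hz]
  rw [Matrix.mul_apply, Fin.sum_univ_castSucc] at h1
  have hne : ∀ j : Fin n, j.castSucc ≠ Fin.last n := fun j => (Fin.castSucc_lt_last j).ne
  simp only [UadjEval, Ueval, Matrix.of_apply, hne, if_false, if_pos rfl, if_true,
    Matrix.one_apply] at h1
  have hL : Polynomial.eval z (∑ i : Fin n, Rp N (u i.castSucc p) * u i.castSucc q
      + u (Fin.last n) p * Rp N (u (Fin.last n) q))
      = z ^ N * ((∑ i : Fin n, adjEval (u i.castSucc p) z * (u i.castSucc q).eval z)
          + (u (Fin.last n) p).eval z * adjEval (u (Fin.last n) q) z) := by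
    rw [Polynomial.eval_add, Polynomial.eval_finset_sum, Polynomial.eval_mul,
      Rp_eval (hdeg _ _) hz, mul_add, Finset.mul_sum]
    congr 1
    · apply Finset.sum_congr rfl
      intro i _
      rw [Polynomial.eval_mul, Rp_eval (hdeg _ _) hz]
      ring
    · ring
  rw [hL]
  by_cases hpq : p = q
  · simp only [if_pos hpq] at h1 ⊢
    rw [h1, mul_one]
    simp
  · simp only [if_neg hpq] at h1 ⊢
    rw [h1, mul_zero]
    simp
end I3sec
section ExistenceDefs

/-- vector of coefficients → polynomial of degree `< N`. -/
noncomputable def polyOfE (n N : ℕ) (x : Fin n × Fin N → ℂ) (i : Fin n) : Polynomial ℂ :=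
  mkPoly N (fun t => if h : t < N then x (i, ⟨t, h⟩) else 0)

/-- The linear map sending coefficient vectors of `(η_i)` to the first `N` coefficients of
the polynomials `∑_i η_i u_{ij}`. -/
noncomputable def Tmap (n N : ℕ) (u : Fin (n+1) → Fin (n+1) → Polynomial ℂ) :
    EuclideanSpace ℂ (Fin n × Fin N) →ₗ[ℂ] EuclideanSpace ℂ (Fin (n + 1) × Fin N) where
  toFun x := WithLp.toLp 2 fun jk => (∑ i : Fin n, polyOfE n N x i * u i.castSucc jk.1).coeff jk.2
  map_add' x y := by
    ext jk
    have hpol : ∀ i, polyOfE n N (x + y) i = polyOfE n N x i + polyOfE n N y i := by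
      intro i
      simp only [polyOfE, mkPoly]
      rw [← Finset.sum_add_distrib]
      apply Finset.sum_congr rfl
      intro t ht
      rw [Finset.mem_range] at ht
      rw [dif_pos ht, dif_pos ht, dif_pos ht, ← map_add]
      rfl
    simp only [hpol, add_mul, Finset.sum_add_distrib, Polynomial.coeff_add]
    simp [PiLp.add_apply, hpol, add_mul, Finset.sum_add_distrib]
  map_smul' c x := by
    ext jk
    have hpol : ∀ i, polyOfE n N (c • x) i = c • polyOfE n N x i := by
      intro i
      simp only [polyOfE, mkPoly, Finset.smul_sum]
      apply Finset.sum_congr rfl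
      intro t ht
      rw [Finset.mem_range] at ht
      rw [dif_pos ht, dif_pos ht, Polynomial.smul_monomial]
      rfl
    simp only [hpol, smul_mul_assoc, ← Finset.smul_sum, Polynomial.coeff_smul,
      RingHom.id_apply]
    simp [PiLp.smul_apply, hpol, smul_mul_assoc, Polynomial.coeff_smul, Finset.mul_sum]

end ExistenceDefs
section ExistenceCore

lemma exists_eta {n N : ℕ} (u : Fin (n+1) → Fin (n+1) → Polynomial ℂ) (hN : 1 ≤ N)
    (hdeg : ∀ i j, (u i j).natDegree ≤ N)
    (hUU : ∀ z : ℂ, z ≠ 0 → UadjEval n u z * Ueval n u z = 1)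
    (hj0 : ∃ j, (u (Fin.last n) j).coeff 0 ≠ 0) :
    ∃ η : Fin n → Polynomial ℂ, (∀ i, (η i).natDegree ≤ N - 1) ∧
      ∀ (j : Fin (n + 1)) (k : ℕ), k < N →
        (∑ i : Fin n, η i * u i.castSucc j + Rp N (u (Fin.last n) j)).coeff k = 0 := by
  classical
  obtain ⟨j0, hj0⟩ := hj0
  set d : EuclideanSpace ℂ (Fin (n + 1) × Fin N) :=
    WithLp.toLp 2 (fun jk => (Rp N (u (Fin.last n) jk.1)).coeff jk.2) with hd_def
  have hinner : ∀ v w : EuclideanSpace ℂ (Fin (n+1) × Fin N),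
      (inner ℂ v w : ℂ) = ∑ jk : Fin (n+1) × Fin N, (starRingEnd ℂ) (v jk) * w jk := by
    intro v w
    simp [PiLp.inner_apply, RCLike.inner_apply, mul_comm]
  have hmem : -d ∈ LinearMap.range (Tmap n N u) := by
    rw [← Submodule.orthogonal_orthogonal (LinearMap.range (Tmap n N u))]
    rw [Submodule.mem_orthogonal]
    intro b hb
    rw [Submodule.mem_orthogonal] at hb
    have hTb : ∀ x, (inner ℂ (Tmap n N u x) b : ℂ) = 0 := fun x => hb _ ⟨x, rfl⟩
    set β : Fin (n + 1) → ℕ → ℂ := fun j k => if h : k < N then b (j, ⟨k, h⟩) else 0 with hβ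
    have hbβ : ∀ (j : Fin (n+1)) (k : Fin N), b (j, k) = β j (k : ℕ) := by
      intro j k
      rw [hβ]
      simp only [Fin.is_lt, dif_pos, Fin.eta]
    set B : Fin (n + 1) → Polynomial ℂ := fun j => mkPoly N (β j) with hB
    -- Step 1: orthogonality conditions
    have hS : ∀ (i : Fin n) (t : ℕ), t < N →
        ∑ j : Fin (n+1), ∑ a ∈ Finset.range N,
          (if t ≤ a then (starRingEnd ℂ) ((u i.castSucc j).coeff (a - t)) else 0) * β j a
          = 0 := by
      intro i t ht
      have h0 := hTb (EuclideanSpace.single (i, (⟨t, ht⟩ : Fin N)) 1)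
      rw [hinner, Fintype.sum_prod_type] at h0
      have hTs : ∀ jk : Fin (n+1) × Fin N,
          Tmap n N u (EuclideanSpace.single (i, (⟨t, ht⟩ : Fin N)) 1) jk
            = if t ≤ (jk.2 : ℕ) then (u i.castSucc jk.1).coeff ((jk.2 : ℕ) - t) else 0 := by
        intro jk
        have hpol : ∀ i' : Fin n,
            polyOfE n N (EuclideanSpace.single ((i, ⟨t, ht⟩) : Fin n × Fin N) (1:ℂ)) i'
              = if i' = i then Polynomial.monomial t 1 else 0 := by
          intro i'
          by_cases h : i' = i
          · subst h
            rw [if_pos rfl, polyOfE, mkPoly, Finset.sum_eq_single t]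
            · rw [dif_pos ht]
              congr 1
              rw [EuclideanSpace.single_apply, if_pos rfl]
            · intro a ha hat
              rw [Finset.mem_range] at ha
              rw [dif_pos ha]
              have hz : (EuclideanSpace.single ((i', ⟨t, ht⟩) : Fin n × Fin N) (1:ℂ))
                  (i', ⟨a, ha⟩) = 0 := by
                rw [EuclideanSpace.single_apply, if_neg]
                simp only [Prod.mk.injEq, Fin.mk.injEq, not_and]
                intro _; omega
              rw [hz, Polynomial.monomial_zero_right]
            · intro h; exact absurd (Finset.mem_range.mpr ht) h
          · rw [if_neg h, polyOfE, mkPoly]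
            apply Finset.sum_eq_zero
            intro a ha
            rw [Finset.mem_range] at ha
            rw [dif_pos ha]
            have hz : (EuclideanSpace.single ((i, ⟨t, ht⟩) : Fin n × Fin N) (1:ℂ))
                (i', ⟨a, ha⟩) = 0 := by
              rw [EuclideanSpace.single_apply, if_neg]
              simp only [Prod.mk.injEq, not_and]
              intro hc; exact absurd hc h
            rw [hz, Polynomial.monomial_zero_right]
        show (∑ i' : Fin n, polyOfE n N _ i' * u i'.castSucc jk.1).coeff jk.2 = _
        rw [Finset.sum_congr rfl fun i' _ => by rw [hpol i']]
        rw [Finset.sum_eq_single i]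
        · rw [if_pos rfl, ← Polynomial.X_pow_eq_monomial, Polynomial.coeff_X_pow_mul']
        · intro i' _ hi'; rw [if_neg hi', zero_mul]
        · intro h; exact absurd (Finset.mem_univ _) h
      have hgoal : ∑ j : Fin (n+1), ∑ a ∈ Finset.range N,
          (if t ≤ a then (starRingEnd ℂ) ((u i.castSucc j).coeff (a - t)) else 0) * β j a
          = ∑ x : Fin (n + 1), ∑ y : Fin N,
            (starRingEnd ℂ) ((Tmap n N u) (EuclideanSpace.single (i, ⟨t, ht⟩) 1) (x, y))
              * b (x, y) := by
        apply Finset.sum_congr rfl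
        intro j _
        rw [← Fin.sum_univ_eq_sum_range (fun a =>
          (if t ≤ a then (starRingEnd ℂ) ((u i.castSucc j).coeff (a - t)) else 0) * β j a) N]
        apply Finset.sum_congr rfl
        intro k _
        rw [hTs (j, k), hbβ j k, apply_ite (starRingEnd ℂ), map_zero]
      rw [hgoal]
      exact h0
    -- the auxiliary polynomials G and H
    set G : Fin n → Polynomial ℂ := fun i => ∑ j, B j * Rp N (u i.castSucc j) with hG
    set H : Polynomial ℂ := ∑ j, B j * u (Fin.last n) j with hH
    have hBdeg : ∀ j : Fin (n+1), (B j).natDegree ≤ N - 1 := fun j => natDegree_mkPoly_le _ _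
    -- all coefficients of G i of index ≥ N vanish
    have hGcoeff : ∀ (i : Fin n) (m : ℕ), N ≤ m → (G i).coeff m = 0 := by
      intro i m hm
      simp only [hG]
      rw [Polynomial.finset_sum_coeff]
      by_cases hm2 : m < 2 * N
      · have ht : m - N < N := by omega
        have hSi := hS i (m - N) ht
        rw [← hSi]
        apply Finset.sum_congr rfl
        intro j _
        simp only [hB]
        rw [mkPoly_mul_coeff N (β j) _ m (by omega)]
        apply Finset.sum_congr rfl
        intro a ha
        rw [Finset.mem_range] at ha
        by_cases hta : m - N ≤ a
        · rw [if_pos hta, Rp_coeff_le _ (by omega : m - a ≤ N)]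
          have he : N - (m - a) = a - (m - N) := by omega
          rw [he, mul_comm]
        · rw [if_neg hta, Rp_coeff_gt (hdeg _ _) (by omega : N < m - a), mul_zero, zero_mul]
      · apply Finset.sum_eq_zero
        intro j _
        apply Polynomial.coeff_eq_zero_of_natDegree_lt
        calc (B j * Rp N (u i.castSucc j)).natDegree
            ≤ (B j).natDegree + (Rp N (u i.castSucc j)).natDegree :=
              Polynomial.natDegree_mul_le
          _ ≤ (N - 1) + N := add_le_add (hBdeg j) (natDegree_Rp_le (hdeg _ _))
          _ < m := by omega
    -- the reconstruction identity
    have hR : ∀ q : Fin (n+1),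
        ∑ i : Fin n, G i * u i.castSucc q + H * Rp N (u (Fin.last n) q)
          = Polynomial.X ^ N * B q := by
      intro q
      have hswap : ∑ i : Fin n, G i * u i.castSucc q
          = ∑ p : Fin (n+1), ∑ i : Fin n, B p * (Rp N (u i.castSucc p) * u i.castSucc q) := by
        simp only [hG, Finset.sum_mul]
        rw [Finset.sum_comm]
        apply Finset.sum_congr rfl
        intro p _
        apply Finset.sum_congr rfl
        intro i _
        ring
      have hHq : H * Rp N (u (Fin.last n) q)
          = ∑ p : Fin (n+1), B p * (u (Fin.last n) p * Rp N (u (Fin.last n) q)) := by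
        rw [hH]
        simp only [Finset.sum_mul]
        apply Finset.sum_congr rfl
        intro p _
        ring
      rw [hswap, hHq, ← Finset.sum_add_distrib]
      have hper : ∀ p : Fin (n+1),
          (∑ i : Fin n, B p * (Rp N (u i.castSucc p) * u i.castSucc q))
            + B p * (u (Fin.last n) p * Rp N (u (Fin.last n) q))
          = B p * (if p = q then (Polynomial.X : Polynomial ℂ) ^ N else 0) := by
        intro p
        rw [← I3 u hdeg hUU p q, mul_add, Finset.mul_sum]
      rw [Finset.sum_congr rfl fun p _ => hper p]
      rw [Finset.sum_congr rfl fun p _ => mul_ite (p = q) (B p) _ _]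
      simp only [mul_zero]
      rw [Finset.sum_ite_eq' Finset.univ q (fun p => B p * Polynomial.X ^ N)]
      rw [if_pos (Finset.mem_univ q), mul_comm]
    -- coefficients ≥ 2N of H * Rp(u last j0) vanish
    have hHRq : ∀ k, 2*N ≤ k → (H * Rp N (u (Fin.last n) j0)).coeff k = 0 := by
      intro k hk
      have h2 : H * Rp N (u (Fin.last n) j0)
          = Polynomial.X ^ N * B j0 - ∑ i : Fin n, G i * u i.castSucc j0 := by
        rw [← hR j0]; ring
      rw [h2, Polynomial.coeff_sub]
      have hXB : (Polynomial.X ^ N * B j0).coeff k = 0 := by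
        rw [Polynomial.coeff_X_pow_mul', if_pos (by omega : N ≤ k)]
        simp only [hB]
        rw [mkPoly_coeff, if_neg (by omega)]
      have hsum : (∑ i : Fin n, G i * u i.castSucc j0).coeff k = 0 := by
        rw [Polynomial.finset_sum_coeff]
        apply Finset.sum_eq_zero
        intro i _
        rw [Polynomial.coeff_mul]
        apply Finset.sum_eq_zero
        intro pr hpr
        rw [Finset.HasAntidiagonal.mem_antidiagonal] at hpr
        by_cases hp2 : pr.2 ≤ N
        · rw [hGcoeff i pr.1 (by omega), zero_mul]
        · rw [Polynomial.coeff_eq_zero_of_natDegree_lt (lt_of_le_of_lt (hdeg _ _) (by omega)),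
            mul_zero]
      rw [hXB, hsum, sub_zero]
    -- coefficients ≥ 2N of H vanish
    have hHdeg : ∀ k, 2*N ≤ k → H.coeff k = 0 := by
      intro k hk
      rw [hH, Polynomial.finset_sum_coeff]
      apply Finset.sum_eq_zero
      intro j _
      apply Polynomial.coeff_eq_zero_of_natDegree_lt
      calc (B j * u (Fin.last n) j).natDegree
          ≤ (B j).natDegree + (u (Fin.last n) j).natDegree := Polynomial.natDegree_mul_le
        _ ≤ (N - 1) + N := add_le_add (hBdeg j) (hdeg _ _)
        _ < k := by omega
    -- downward induction: all coefficients ≥ N of H vanish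
    have hHall : ∀ a, N ≤ a → H.coeff a = 0 := by
      have hmain : ∀ s : ℕ, ∀ a : ℕ, N ≤ a → 2*N - s ≤ a → H.coeff a = 0 := by
        intro s
        induction s with
        | zero => intro a ha h2; exact hHdeg a (by omega)
        | succ s ih =>
          intro a ha h2
          by_cases hc : 2*N - s ≤ a
          · exact ih a ha hc
          · have hq := hHRq (a + N) (by omega)
            rw [Polynomial.coeff_mul] at hq
            rw [Finset.sum_eq_single (a, N)] at hq
            · have hqN : (Rp N (u (Fin.last n) j0)).coeff N
                  = (starRingEnd ℂ) ((u (Fin.last n) j0).coeff 0) := by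
                rw [Rp_coeff_le _ le_rfl, Nat.sub_self]
              rw [hqN] at hq
              rcases mul_eq_zero.mp hq with h | h
              · exact h
              · exact absurd (star_eq_zero.mp (by rwa [starRingEnd_apply] at h)) hj0
            · intro pr hpr hne
              rw [Finset.HasAntidiagonal.mem_antidiagonal] at hpr
              by_cases h1 : a < pr.1
              · rw [ih pr.1 (by omega) (by omega), zero_mul]
              · by_cases hpa : pr.1 = a
                · exact absurd (Prod.ext hpa (by omega)) hne
                · rw [Rp_coeff_gt (hdeg _ _) (by omega : N < pr.2), mul_zero]
            · intro hnm
              exact absurd (Finset.HasAntidiagonal.mem_antidiagonal.mpr (rfl : (a, N).1 + (a, N).2 = a + N)) hnm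
      exact fun a ha => hmain (2*N) a ha (by omega)
    -- conclusion: ⟪b, -d⟫ = 0
    rw [hinner, Fintype.sum_prod_type]
    have hHN : H.coeff N = ∑ j : Fin (n+1), ∑ a ∈ Finset.range N,
        β j a * (u (Fin.last n) j).coeff (N - a) := by
      rw [hH, Polynomial.finset_sum_coeff]
      apply Finset.sum_congr rfl
      intro j _
      simp only [hB]
      rw [mkPoly_mul_coeff N (β j) _ N (by omega)]
    have hstep : ∀ j : Fin (n+1), ∑ k : Fin N, (starRingEnd ℂ) (b (j, k)) * (-d) (j, k)
        = -((starRingEnd ℂ) (∑ a ∈ Finset.range N, β j a * (u (Fin.last n) j).coeff (N - a))) := by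
      intro j
      rw [map_sum, ← Finset.sum_neg_distrib]
      rw [← Fin.sum_univ_eq_sum_range (fun a =>
        -((starRingEnd ℂ) (β j a * (u (Fin.last n) j).coeff (N - a)))) N]
      apply Finset.sum_congr rfl
      intro k _
      have hdv : (-d) (j, k) = -((Rp N (u (Fin.last n) j)).coeff (k : ℕ)) := rfl
      rw [hdv, Rp_coeff_le _ (le_of_lt k.is_lt), hbβ, _root_.map_mul]
      ring
    rw [Finset.sum_congr rfl fun j _ => hstep j]
    rw [Finset.sum_neg_distrib, ← map_sum, ← hHN, hHall N le_rfl, map_zero, neg_zero]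
  -- construct η from the solution
  obtain ⟨x, hx⟩ := hmem
  refine ⟨fun i => polyOfE n N x i, fun i => natDegree_mkPoly_le _ _, ?_⟩
  intro j k hk
  have h1 : Tmap n N u x (j, ⟨k, hk⟩) = (-d) (j, ⟨k, hk⟩) := by rw [hx]
  have h2 : (∑ i : Fin n, polyOfE n N x i * u i.castSucc j).coeff k
      = -((Rp N (u (Fin.last n) j)).coeff k) := h1
  rw [Polynomial.coeff_add, h2]
  ring

end ExistenceCore
theorem stmt_14 {n N : ℕ} (hn : 1 ≤ n) (hN : 1 ≤ N)
    (u : Fin (n + 1) → Fin (n + 1) → Polynomial ℂ) (hu : IsPU1 n N u) :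
    ∃! ζ : Fin n → Polynomial ℂ,
      (∀ i, (ζ i).natDegree ≤ N ∧ (ζ i).coeff 0 = 0) ∧
      ∀ i j, InPPlus (fun z => (Feval n ζ z * Ueval n u z) i j) := by
  obtain ⟨hdeg, hUU, hdet, hU1, hj0⟩ := hu
  obtain ⟨η, hηdeg, hηc⟩ := exists_eta u hN hdeg hUU hj0
  set ζ : Fin n → Polynomial ℂ := fun i => (η i).reflect N with hζdef
  have hζdeg : ∀ i, (ζ i).natDegree ≤ N := fun i =>
    natDegree_reflect_le (le_trans (hηdeg i) (by omega))
  have hζ0 : ∀ i, (ζ i).coeff 0 = 0 := by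
    intro i
    simp only [hζdef]
    rw [Polynomial.coeff_reflect, Polynomial.revAt_le (Nat.zero_le N), Nat.sub_zero]
    exact Polynomial.coeff_eq_zero_of_natDegree_lt (lt_of_le_of_lt (hηdeg i) (by omega))
  have hInP : ∀ i j, InPPlus fun z => (Feval n ζ z * Ueval n u z) i j := by
    intro i j
    induction i using Fin.lastCases with
    | cast i =>
      refine ⟨u i.castSucc j, fun z hz => ?_⟩
      show (Feval n ζ z * Ueval n u z) i.castSucc j = (u i.castSucc j).eval z
      rw [mul_Feval_castSucc, Ueval_castSucc]
    | last =>
      obtain ⟨p, hp⟩ := (Polynomial.X_pow_dvd_iff).mpr (fun d hd => hηc j d hd)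
      refine ⟨p, fun z hz => ?_⟩
      show (Feval n ζ z * Ueval n u z) (Fin.last n) j = p.eval z
      rw [mul_Feval_last]
      apply mul_left_cancel₀ (pow_ne_zero N hz)
      rw [mul_add, Finset.mul_sum]
      have hterm : ∀ k : Fin n, z ^ N * ((ζ k).eval z⁻¹ * Ueval n u z k.castSucc j)
          = (η k).eval z * (u k.castSucc j).eval z := by
        intro k
        rw [Ueval_castSucc]
        have hx : (η k).eval z = z ^ N * (ζ k).eval z⁻¹ := by
          rw [← reflect_eval (hζdeg k) hz]
          simp only [hζdef]
          rw [reflect_reflect']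
        rw [hx]; ring
      rw [Finset.sum_congr rfl fun k _ => hterm k]
      rw [Ueval_last, ← Rp_eval (hdeg _ _) hz]
      have heq := congrArg (Polynomial.eval z) hp
      rw [Polynomial.eval_add, Polynomial.eval_finset_sum, Polynomial.eval_mul,
        Polynomial.eval_pow, Polynomial.eval_X] at heq
      simp only [Polynomial.eval_mul] at heq
      exact heq
  refine ⟨ζ, ⟨fun i => ⟨hζdeg i, hζ0 i⟩, hInP⟩, ?_⟩
  intro ζ' hζ'
  exact unique_sol u hdet ζ' ζ hζ'.1 (fun i => ⟨hζdeg i, hζ0 i⟩) hζ'.2 hInP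
end

section
/- Let m ≥ 2, N ≥ 1, let U(z) ∈ PU_1(m,N), and let j be an index with u_{mj}(0) ≠ 0. For each i = 1, …, m−1, the function ũ_{ij}(z)/u_{mj}(z) has a Laurent expansion at z = 0 whose principal (negative-power) part ζ_i(z) := [ũ_{ij}(z)/u_{mj}(z)]^− belongs to P_N^−, and with F(z) the matrix associated to these ζ_1, …, ζ_{m−1}, every entry of F(z)U(z) lies in P^+. -/
open Matrix Polynomial BigOperators

noncomputable def reflN (N : ℕ) (p : Polynomial ℂ) : Polynomial ℂ :=
  ∑ k ∈ Finset.range (N + 1), Polynomial.C (p.coeff (N - k)) * Polynomial.X ^ k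

lemma inv_pow_helper {z : ℂ} (hz : z ≠ 0) {k m : ℕ} (hk : k ≤ m) :
    (z⁻¹) ^ (m - k) = z ^ k * (z ^ m)⁻¹ := by
  have h : z ^ k * z ^ (m - k) = z ^ m := by rw [← pow_add]; congr 1; omega
  have h1 : z ^ (m - k) ≠ 0 := pow_ne_zero _ hz
  have h2 : z ^ m ≠ 0 := pow_ne_zero _ hz
  rw [inv_pow]
  field_simp
  linear_combination -h

lemma reflN_eval {N : ℕ} {p : Polynomial ℂ} (hp : p.natDegree ≤ N) {z : ℂ} (hz : z ≠ 0) :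
    (reflN N p).eval z = z ^ N * p.eval z⁻¹ := by
  have h1 : p.eval z⁻¹ = ∑ k ∈ Finset.range (N + 1), p.coeff k * z⁻¹ ^ k :=
    Polynomial.eval_eq_sum_range' (Nat.lt_succ_of_le hp) _
  have h2 : (reflN N p).eval z = ∑ k ∈ Finset.range (N + 1), p.coeff (N - k) * z ^ k := by
    rw [reflN, Polynomial.eval_finset_sum]
    simp
  rw [h1, h2, Finset.mul_sum, ← Finset.sum_range_reflect (fun k => z ^ N * (p.coeff k * z⁻¹ ^ k)) (N + 1)]
  refine Finset.sum_congr rfl fun k hk => ?_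
  rw [Finset.mem_range, Nat.lt_succ_iff] at hk
  have : (N + 1 - 1 - k) = N - k := by omega
  rw [this, inv_pow_helper hz hk]
  have h3 : z ^ N ≠ 0 := pow_ne_zero _ hz
  field_simp

lemma reflN_natDegree_le (N : ℕ) (p : Polynomial ℂ) : (reflN N p).natDegree ≤ N := by
  refine Polynomial.natDegree_sum_le_of_forall_le _ _ fun k hk => ?_
  refine (Polynomial.natDegree_C_mul_X_pow_le _ _).trans ?_
  exact Nat.lt_succ_iff.mp (Finset.mem_range.mp hk)

theorem stmt_15 {n N : ℕ} (hn : 1 ≤ n) (hN : 1 ≤ N)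
    (u : Fin (n + 1) → Fin (n + 1) → Polynomial ℂ) (hu : IsPU1 n N u)
    (j : Fin (n + 1)) (hj : (u (Fin.last n) j).coeff 0 ≠ 0) :
    ∃ ζ : Fin n → Polynomial ℂ,
      (∀ i, (ζ i).natDegree ≤ N ∧ (ζ i).coeff 0 = 0) ∧
      (∀ i : Fin n, ∃ g : ℂ → ℂ, AnalyticAt ℂ g 0 ∧
        ∀ᶠ z in nhdsWithin (0 : ℂ) {(0 : ℂ)}ᶜ,
          adjEval (u i.castSucc j) z / (u (Fin.last n) j).eval z =
            (ζ i).eval z⁻¹ + g z) ∧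
      ∀ a b, InPPlus (fun z => (Feval n ζ z * Ueval n u z) a b) := by
  obtain ⟨M, rfl⟩ : ∃ M, N = M + 1 := ⟨N - 1, (Nat.succ_pred_eq_of_pos hN).symm⟩
  obtain ⟨hdeg, hUU, -, -, -⟩ := hu
  have hadj : ∀ (q : Polynomial ℂ) (z : ℂ), adjEval q z = (q.map (starRingEnd ℂ)).eval z⁻¹ :=
    fun _ _ => rfl
  set v := u (Fin.last n) j with hvdef
  have hv0 : v.eval 0 ≠ 0 := by rwa [← Polynomial.coeff_zero_eq_eval_zero]
  have hXv : ¬ (Polynomial.X ∣ v) := by rwa [Polynomial.X_dvd_iff]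
  have hvc : PowerSeries.constantCoeff (v : PowerSeries ℂ) ≠ 0 := by
    rwa [← PowerSeries.coeff_zero_eq_constantCoeff, Polynomial.coeff_coe]
  have hne : ∀ i : Fin n, i.castSucc ≠ Fin.last n := fun i => (Fin.castSucc_lt_last i).ne
  -- Step 1: construct T i
  have hT0 : ∀ i : Fin n, ∃ Tq : Polynomial ℂ, Tq.natDegree < M + 1 ∧
      Polynomial.X ^ (M + 1) ∣
        (reflN (M + 1) ((u i.castSucc j).map (starRingEnd ℂ)) - Tq * v) := by
    intro i
    set r : Polynomial ℂ := reflN (M + 1) ((u i.castSucc j).map (starRingEnd ℂ)) with hr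
    refine ⟨PowerSeries.trunc (M + 1) ((r : PowerSeries ℂ) * (v : PowerSeries ℂ)⁻¹),
      PowerSeries.natDegree_trunc_lt _ _, ?_⟩
    rw [Polynomial.X_pow_dvd_iff]
    intro d hd
    have hSv : ((r : PowerSeries ℂ) * (v : PowerSeries ℂ)⁻¹) * (v : PowerSeries ℂ)
        = (r : PowerSeries ℂ) := by
      rw [mul_assoc, mul_comm ((v : PowerSeries ℂ)⁻¹), PowerSeries.mul_inv_cancel _ hvc, mul_one]
    rw [Polynomial.coeff_sub, sub_eq_zero, Polynomial.coeff_mul]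
    have h1 : r.coeff d = PowerSeries.coeff d
        (((r : PowerSeries ℂ) * (v : PowerSeries ℂ)⁻¹) * (v : PowerSeries ℂ)) := by
      rw [hSv, Polynomial.coeff_coe]
    rw [h1, PowerSeries.coeff_mul]
    refine (Finset.sum_congr rfl fun x hx => ?_).symm
    replace hx : x.1 + x.2 = d := by simpa using hx
    rw [PowerSeries.coeff_trunc, if_pos (by omega), Polynomial.coeff_coe]
  choose T hTdeg hTdvd using hT0
  choose w hw using fun i => (hTdvd i)
  -- ζ
  obtain ⟨ζ, hζdef⟩ : ∃ ζ : Fin n → Polynomial ℂ, ∀ i, ζ i =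
      ∑ k ∈ Finset.range (M + 1), Polynomial.C ((T i).coeff k) * Polynomial.X ^ (M + 1 - k) :=
    ⟨_, fun i => rfl⟩
  have hζeval : ∀ (i : Fin n) (z : ℂ), z ≠ 0 →
      (ζ i).eval z⁻¹ = (T i).eval z / z ^ (M + 1) := by
    intro i z hz
    have hT' : (T i).eval z = ∑ k ∈ Finset.range (M + 1), (T i).coeff k * z ^ k :=
      Polynomial.eval_eq_sum_range' (hTdeg i) z
    rw [hT', hζdef, Polynomial.eval_finset_sum, Finset.sum_div]
    refine Finset.sum_congr rfl fun k hk => ?_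
    rw [Finset.mem_range] at hk
    simp only [Polynomial.eval_mul, Polynomial.eval_C, Polynomial.eval_pow, Polynomial.eval_X]
    rw [inv_pow_helper hz hk.le, div_eq_mul_inv]
    ring
  -- unitarity scalar identity
  have hrow : ∀ (b : Fin (n + 1)) (z : ℂ), z ≠ 0 →
      (∑ i : Fin n, adjEval (u i.castSucc j) z * (u i.castSucc b).eval z)
        + v.eval z * adjEval (u (Fin.last n) b) z = if j = b then 1 else 0 := by
    intro b z hz
    have h2 : (UadjEval n u z * Ueval n u z) j b
        = (1 : Matrix (Fin (n + 1)) (Fin (n + 1)) ℂ) j b := by rw [hUU z hz]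
    rw [Matrix.mul_apply, Fin.sum_univ_castSucc, Matrix.one_apply] at h2
    simpa [UadjEval, Ueval, hne, hvdef] using h2
  -- polynomial identity
  have hpoly : ∀ b : Fin (n + 1),
      (∑ i : Fin n, reflN (M + 1) ((u i.castSucc j).map (starRingEnd ℂ)) * u i.castSucc b)
        + v * reflN (M + 1) ((u (Fin.last n) b).map (starRingEnd ℂ))
      = if j = b then (Polynomial.X : Polynomial ℂ) ^ (M + 1) else 0 := by
    intro b
    apply Polynomial.eq_of_infinite_eval_eq
    refine Set.Infinite.mono ?_ ((Set.finite_singleton (0 : ℂ)).infinite_compl)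
    intro z hz
    have hz : z ≠ 0 := hz
    have h3 := hrow b z hz
    simp only [Set.mem_setOf_eq]
    rw [Polynomial.eval_add, Polynomial.eval_finset_sum, Polynomial.eval_mul]
    have hsum : ∀ i : Fin n,
        (reflN (M + 1) ((u i.castSucc j).map (starRingEnd ℂ)) * u i.castSucc b).eval z
        = z ^ (M + 1) * (adjEval (u i.castSucc j) z * (u i.castSucc b).eval z) := by
      intro i
      rw [Polynomial.eval_mul,
        reflN_eval (Polynomial.natDegree_map_le.trans (hdeg _ _)) hz, hadj]
      ring
    rw [Finset.sum_congr rfl fun i _ => hsum i,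
      reflN_eval (Polynomial.natDegree_map_le.trans (hdeg _ _)) hz, ← Finset.mul_sum]
    have : z ^ (M + 1) * (∑ i : Fin n, adjEval (u i.castSucc j) z * (u i.castSucc b).eval z)
        + v.eval z * (z ^ (M + 1) * ((u (Fin.last n) b).map (starRingEnd ℂ)).eval z⁻¹)
        = z ^ (M + 1) * ((∑ i : Fin n, adjEval (u i.castSucc j) z * (u i.castSucc b).eval z)
            + v.eval z * adjEval (u (Fin.last n) b) z) := by rw [hadj]; ring
    rw [this, h3]
    split_ifs <;> simp
  -- divisibility of G b
  have hdvdG : ∀ b : Fin (n + 1), Polynomial.X ^ (M + 1) ∣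
      ((∑ i : Fin n, T i * u i.castSucc b)
        + reflN (M + 1) ((u (Fin.last n) b).map (starRingEnd ℂ))) := by
    intro b
    have key : v * ((∑ i : Fin n, T i * u i.castSucc b)
          + reflN (M + 1) ((u (Fin.last n) b).map (starRingEnd ℂ)))
        = ((∑ i : Fin n, reflN (M + 1) ((u i.castSucc j).map (starRingEnd ℂ)) * u i.castSucc b)
            + v * reflN (M + 1) ((u (Fin.last n) b).map (starRingEnd ℂ)))
          - Polynomial.X ^ (M + 1) * (∑ i : Fin n, w i * u i.castSucc b) := by
      rw [mul_add, Finset.mul_sum, Finset.mul_sum]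
      have hterm : ∀ i ∈ Finset.univ, v * (T i * u i.castSucc b)
          = reflN (M + 1) ((u i.castSucc j).map (starRingEnd ℂ)) * u i.castSucc b
            - Polynomial.X ^ (M + 1) * (w i * u i.castSucc b) :=
        fun i _ => by linear_combination (-(u i.castSucc b)) * (hw i)
      rw [Finset.sum_congr rfl hterm, Finset.sum_sub_distrib]
      ring
    have hd : Polynomial.X ^ (M + 1) ∣ v * ((∑ i : Fin n, T i * u i.castSucc b)
        + reflN (M + 1) ((u (Fin.last n) b).map (starRingEnd ℂ))) := by
      rw [key, hpoly b]
      refine dvd_sub ?_ ⟨_, rfl⟩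
      split_ifs
      · exact dvd_rfl
      · exact dvd_zero _
    exact Polynomial.prime_X.pow_dvd_of_dvd_mul_left _ hXv hd
  choose q hq using hdvdG
  refine ⟨ζ, ?_, ?_, ?_⟩
  · intro i
    constructor
    · rw [hζdef]
      refine Polynomial.natDegree_sum_le_of_forall_le _ _ fun k _ => ?_
      exact (Polynomial.natDegree_C_mul_X_pow_le _ _).trans (Nat.sub_le _ _)
    · rw [hζdef, Polynomial.finset_sum_coeff]
      refine Finset.sum_eq_zero fun k hk => ?_
      rw [Finset.mem_range] at hk
      rw [Polynomial.coeff_C_mul, Polynomial.coeff_X_pow, if_neg (by omega), mul_zero]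
  · intro i
    refine ⟨fun z => (w i).eval z / v.eval z, ?_, ?_⟩
    · exact ((w i).differentiable.analyticAt 0).div (v.differentiable.analyticAt 0) hv0
    · have hvnear : ∀ᶠ z : ℂ in nhdsWithin 0 {(0 : ℂ)}ᶜ, v.eval z ≠ 0 :=
        Filter.Eventually.filter_mono nhdsWithin_le_nhds
          ((v.continuous.continuousAt).eventually_ne hv0)
      have hself : ∀ᶠ z : ℂ in nhdsWithin 0 {(0 : ℂ)}ᶜ, z ≠ 0 :=
        eventually_nhdsWithin_of_forall fun z hz => hz
      filter_upwards [hvnear, hself] with z hvz hz0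
      rw [hadj, hζeval i z hz0]
      set A := Polynomial.eval z⁻¹ ((u i.castSucc j).map (starRingEnd ℂ)) with hA
      have heq := congrArg (Polynomial.eval z) (hw i)
      rw [Polynomial.eval_sub, Polynomial.eval_mul, Polynomial.eval_mul, Polynomial.eval_pow,
        Polynomial.eval_X, reflN_eval (Polynomial.natDegree_map_le.trans (hdeg _ _)) hz0] at heq
      rw [← hA] at heq
      have hzP : (z : ℂ) ^ (M + 1) ≠ 0 := pow_ne_zero _ hz0
      field_simp
      linear_combination heq
  · intro a b
    induction a using Fin.lastCases with
    | last =>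
      refine ⟨q b, fun z hz => ?_⟩
      show (Feval n ζ z * Ueval n u z) (Fin.last n) b = (q b).eval z
      rw [Matrix.mul_apply, Fin.sum_univ_castSucc]
      have hF1 : ∀ i : Fin n, Feval n ζ z (Fin.last n) i.castSucc = (ζ i).eval z⁻¹ := by
        intro i
        simp [Feval, Fin.lastCases_last, Fin.lastCases_castSucc]
      have hF2 : Feval n ζ z (Fin.last n) (Fin.last n) = 1 := by
        simp [Feval, Fin.lastCases_last]
      have hU1 : ∀ i : Fin n, Ueval n u z i.castSucc b = (u i.castSucc b).eval z := by
        intro i; simp [Ueval, hne i]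
      have hU2 : Ueval n u z (Fin.last n) b = adjEval (u (Fin.last n) b) z := by
        simp [Ueval]
      simp only [hF1, hF2, hU1, hU2, one_mul]
      have hzP : (z : ℂ) ^ (M + 1) ≠ 0 := pow_ne_zero _ hz
      have h2 : adjEval (u (Fin.last n) b) z
          = (reflN (M + 1) ((u (Fin.last n) b).map (starRingEnd ℂ))).eval z / z ^ (M + 1) := by
        rw [hadj, reflN_eval (Polynomial.natDegree_map_le.trans (hdeg _ _)) hz,
          mul_div_cancel_left₀ _ hzP]
      have hGz := congrArg (Polynomial.eval z) (hq b)
      rw [Polynomial.eval_mul, Polynomial.eval_pow, Polynomial.eval_X, Polynomial.eval_add,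
        Polynomial.eval_finset_sum] at hGz
      calc (∑ i : Fin n, (ζ i).eval z⁻¹ * (u i.castSucc b).eval z) + adjEval (u (Fin.last n) b) z
          = ((∑ i : Fin n, (T i * u i.castSucc b).eval z)
              + (reflN (M + 1) ((u (Fin.last n) b).map (starRingEnd ℂ))).eval z) / z ^ (M + 1) := by
            rw [add_div, Finset.sum_div, h2]
            congr 1
            refine Finset.sum_congr rfl fun i _ => ?_
            rw [Polynomial.eval_mul, hζeval i z hz]
            ring
        _ = (q b).eval z := by
            rw [hGz, mul_div_cancel_left₀ _ hzP]
    | cast i' =>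
      refine ⟨u i'.castSucc b, fun z hz => ?_⟩
      show (Feval n ζ z * Ueval n u z) i'.castSucc b = (u i'.castSucc b).eval z
      rw [Matrix.mul_apply]
      have hF : ∀ i2 : Fin (n + 1), Feval n ζ z i'.castSucc i2
          = if i'.castSucc = i2 then 1 else 0 := by
        intro i2
        simp [Feval, Fin.lastCases_castSucc]
      simp only [hF, ite_mul, one_mul, zero_mul]
      rw [Finset.sum_ite_eq Finset.univ i'.castSucc (fun i2 => Ueval n u z i2 b),
        if_pos (Finset.mem_univ _)]
      simp [Ueval, hne i']
end

section
/- Let m ≥ 2, N ≥ 1, and let U(z) be an m×m matrix function whose first m−1 rows have entries u_{ij}(z) ∈ P_N^+ and whose last-row entries are ũ_{mj}(z) with u_{mj} ∈ P_N^+, such that Ũ(z)U(z) = I_m and det U(z) = 1 for all z ∈ ℂ \ {0}. Suppose ζ_1, …, ζ_{m−1} ∈ P_N^− are such that Ψ(z) := F(z)U(z) has all entries in P^+, where F(z) is the associated matrix. Then det Ψ(z) = 1 for all z ∈ ℂ, the last row (ψ_{m1}, …, ψ_{mm}) of Ψ satisfies Σ_{j=1}^m ψ_{mj}(z)u_{mj}(z)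 = 1 for all z ∈ ℂ, and consequently u_{mj}(0) ≠ 0 for at least one j. -/
open Matrix Polynomial BigOperators

theorem stmt_17 {n N : ℕ} (hn : 1 ≤ n) (hN : 1 ≤ N)
    (u : Fin (n + 1) → Fin (n + 1) → Polynomial ℂ)
    (hdeg : ∀ i j, (u i j).natDegree ≤ N)
    (hpara : ∀ z : ℂ, z ≠ 0 → UadjEval n u z * Ueval n u z = 1)
    (hdet : ∀ z : ℂ, z ≠ 0 → (Ueval n u z).det = 1)
    (ζ : Fin n → Polynomial ℂ)
    (hζ : ∀ i, (ζ i).natDegree ≤ N ∧ (ζ i).coeff 0 = 0)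
    (ψ : Fin (n + 1) → Fin (n + 1) → Polynomial ℂ)
    (hψ : ∀ z : ℂ, z ≠ 0 →
      (Matrix.of fun i j => (ψ i j).eval z) = Feval n ζ z * Ueval n u z) :
    (∀ z : ℂ, (Matrix.of fun i j => (ψ i j).eval z).det = 1) ∧
    (∀ z : ℂ, ∑ j, (ψ (Fin.last n) j).eval z * (u (Fin.last n) j).eval z = 1) ∧
    ∃ j, (u (Fin.last n) j).coeff 0 ≠ 0 := by

  classical
  have hinf : ({(0:ℂ)}ᶜ : Set ℂ).Infinite := (Set.finite_singleton 0).infinite_compl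
  -- F is lower triangular with unit diagonal
  have hFdiag : ∀ z : ℂ, ∀ i, Feval n ζ z i i = 1 := by
    intro z i
    induction i using Fin.lastCases with
    | last => simp [Feval]
    | cast i' => simp [Feval]
  have hFdet : ∀ z : ℂ, (Feval n ζ z).det = 1 := by
    intro z
    have ht : (Feval n ζ z).BlockTriangular OrderDual.toDual := by
      intro i j hij
      have hij' : i < j := hij
      induction i using Fin.lastCases with
      | last => exact absurd (Fin.le_last j) (not_le.mpr hij')
      | cast i' =>
        have : i'.castSucc ≠ j := ne_of_lt hij'
        simp [Feval, this]
    rw [Matrix.det_of_lowerTriangular _ ht]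
    simp [hFdiag z]
  -- right inverse
  have hUU : ∀ z : ℂ, z ≠ 0 → Ueval n u z * UadjEval n u z = 1 := fun z hz =>
    mul_eq_one_comm.mp (hpara z hz)
  -- determinant polynomial
  set Pdet : Polynomial ℂ := (Matrix.of fun i j => ψ i j).det with hPdetdef
  have hPeval : ∀ z : ℂ, (Matrix.of fun i j => (ψ i j).eval z).det = Pdet.eval z := by
    intro z
    have : (Matrix.of fun i j => (ψ i j).eval z) =
        (Matrix.of fun i j => ψ i j).map (Polynomial.evalRingHom z) := by
      ext i j; simp [Matrix.map_apply]
    rw [this]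
    exact (RingHom.map_det (Polynomial.evalRingHom z) (Matrix.of fun i j => ψ i j)).symm
  have hPdet1 : Pdet = 1 := by
    apply Polynomial.eq_of_infinite_eval_eq
    apply hinf.mono
    intro z hz
    have hz' : z ≠ 0 := hz
    show Pdet.eval z = (1 : Polynomial ℂ).eval z
    rw [← hPeval z, hψ z hz', Matrix.det_mul, hFdet z, hdet z hz']
    simp
  -- the sum polynomial
  set Q : Polynomial ℂ := ∑ j, ψ (Fin.last n) j * u (Fin.last n) j with hQdef
  have hQeval : ∀ z : ℂ, Q.eval z
      = ∑ j, (ψ (Fin.last n) j).eval z * (u (Fin.last n) j).eval z := by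
    intro z
    simp [hQdef, Polynomial.eval_finset_sum]
  have hQ1 : Q = 1 := by
    apply Polynomial.eq_of_infinite_eval_eq
    apply hinf.mono
    intro z hz
    have hz' : z ≠ 0 := hz
    show Q.eval z = (1 : Polynomial ℂ).eval z
    rw [hQeval z]
    have hmul : (Matrix.of fun i j => (ψ i j).eval z) * UadjEval n u z = Feval n ζ z := by
      rw [hψ z hz', Matrix.mul_assoc, hUU z hz', Matrix.mul_one]
    have := congrFun (congrFun hmul (Fin.last n)) (Fin.last n)
    rw [Matrix.mul_apply] at this
    have hsum : ∑ j, (ψ (Fin.last n) j).eval z * (u (Fin.last n) j).eval z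
        = Feval n ζ z (Fin.last n) (Fin.last n) := by
      rw [← this]
      apply Finset.sum_congr rfl
      intro j _
      simp [UadjEval]
    rw [hsum, hFdiag z]
    simp
  refine ⟨?_, ?_, ?_⟩
  · intro z
    rw [hPeval z, hPdet1]
    simp
  · intro z
    rw [← hQeval z, hQ1]
    simp
  · by_contra h
    push_neg at h
    have h0 := congrArg (Polynomial.eval 0) hQ1
    rw [hQeval 0] at h0
    have : ∑ j, (ψ (Fin.last n) j).eval 0 * (u (Fin.last n) j).eval 0 = 0 := by
      apply Finset.sum_eq_zero
      intro j _
      simp only [Polynomial.coeff_zero_eq_eval_zero] at h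
      rw [h j, mul_zero]
    rw [this] at h0
    simp at h0
end
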